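/- arXiv:2002.02830 — 4 statements merged into one kernel-verified Lean document; each statement's English description precedes it below -/
import Mathlib

section
/- Let L be the Laplacian of a strongly connected weighted directed graph, and let Θ = diag(θ₁,...,θ_N) where θ is the positive left null vector of L normalized so that θ𝟏_N = N. Then the matrix ℒ := ΘL + LᵀΘ is symmetric positive semi-definite. -/
/-! With `aᵢⱼ ≥ 0` the edge weights, `L = diag(∑ⱼ aᵢⱼ) - A`, and `θ L = 0` says that `θ`
balances the weighted in- and out-flow at every node: `∑ᵢ θᵢ aᵢⱼ = θⱼ ∑ₖ aⱼₖ`. Using this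
balance for the squares `xⱼ²`, the quadratic form of `ℒ = ΘL + (ΘL)ᵀ` becomes
`xᵀℒx = 2 xᵀΘLx = ∑ᵢⱼ θᵢ aᵢⱼ (xᵢ - xⱼ)² ≥ 0`. -/

open Matrix

def IsLaplacianOfStronglyConnectedDigraph {N : ℕ} (L : Matrix (Fin N) (Fin N) ℝ) : Prop :=
  ∃ Adj : Matrix (Fin N) (Fin N) ℝ,
    (∀ i j, 0 ≤ Adj i j) ∧ (∀ i, Adj i i = 0) ∧
    (∀ i j : Fin N, i ≠ j → Relation.TransGen (fun a b => Adj b a ≠ 0) i j) ∧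
    L = Matrix.diagonal (fun i => ∑ j, Adj i j) - Adj

namespace Matrix

variable {ι : Type*} [Fintype ι]

theorem dotProduct_add_transpose_mulVec {R : Type*} [CommSemiring R] (M : Matrix ι ι R)
    (x : ι → R) : x ⬝ᵥ ((M + Mᵀ) *ᵥ x) = 2 * (x ⬝ᵥ (M *ᵥ x)) := by
  rw [add_mulVec, dotProduct_add, mulVec_transpose, dotProduct_comm x (x ᵥ* M),
    dotProduct_mulVec, two_mul]

theorem posSemidef_add_transpose_of_dotProduct_mulVec_nonneg (M : Matrix ι ι ℝ)
    (hM : ∀ x, 0 ≤ x ⬝ᵥ (M *ᵥ x)) : (M + Mᵀ).PosSemidef := by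
  have hHerm : (M + Mᵀ).IsHermitian := by
    simpa only [conjTranspose_eq_transpose_of_trivial] using isHermitian_add_transpose_self M
  refine posSemidef_iff_dotProduct_mulVec.mpr ⟨hHerm, fun x => ?_⟩
  rw [star_trivial, dotProduct_add_transpose_mulVec]
  linarith [hM x]

theorem sum_sum_mul_sub_sq (w : ι → ι → ℝ) (x : ι → ℝ) :
    ∑ i, ∑ j, w i j * (x i - x j) ^ 2 =
      ∑ i, (∑ j, w i j) * x i ^ 2 + ∑ j, (∑ i, w i j) * x j ^ 2
        - 2 * ∑ i, ∑ j, w i j * (x i * x j) := by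
  have expand : ∀ i j, w i j * (x i - x j) ^ 2 =
      w i j * x i ^ 2 + w i j * x j ^ 2 - 2 * (w i j * (x i * x j)) := fun i j => by ring
  simp only [expand, Finset.sum_sub_distrib, Finset.sum_add_distrib, Finset.sum_mul,
    Finset.mul_sum]
  rw [Finset.sum_comm (f := fun i j => w i j * x j ^ 2)]

variable [DecidableEq ι]

theorem vecMul_diagonal_rowSum_sub_eq_zero_iff (A : Matrix ι ι ℝ) (θ : ι → ℝ) :
    θ ᵥ* (diagonal (fun i => ∑ j, A i j) - A) = 0 ↔
      ∀ j, ∑ i, θ i * A i j = θ j * ∑ k, A j k := by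
  rw [vecMul_sub, sub_eq_zero, funext_iff]
  simp only [vecMul_diagonal]
  exact forall_congr' fun j => eq_comm

theorem dotProduct_diagonal_mul_mulVec (A : Matrix ι ι ℝ) (θ x : ι → ℝ) :
    x ⬝ᵥ ((diagonal θ * (diagonal (fun i => ∑ j, A i j) - A)) *ᵥ x) =
      ∑ i, (θ i * ∑ j, A i j) * x i ^ 2 - ∑ i, ∑ j, θ i * A i j * (x i * x j) := by
  rw [← mulVec_mulVec, sub_mulVec, dotProduct, ← Finset.sum_sub_distrib]
  refine Finset.sum_congr rfl fun i _ => ?_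
  simp only [mulVec_diagonal, Pi.sub_apply]
  simp only [mulVec, dotProduct, Finset.mul_sum, Finset.sum_mul, ← Finset.sum_sub_distrib]
  exact Finset.sum_congr rfl fun j _ => by ring

theorem two_mul_dotProduct_diagonal_mul_mulVec_of_vecMul_eq_zero (A : Matrix ι ι ℝ)
    (θ : ι → ℝ) (hθ : θ ᵥ* (diagonal (fun i => ∑ j, A i j) - A) = 0) (x : ι → ℝ) :
    2 * (x ⬝ᵥ ((diagonal θ * (diagonal (fun i => ∑ j, A i j) - A)) *ᵥ x)) =
      ∑ i, ∑ j, θ i * A i j * (x i - x j) ^ 2 := by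
  have hbalance := (vecMul_diagonal_rowSum_sub_eq_zero_iff A θ).mp hθ
  rw [dotProduct_diagonal_mul_mulVec, sum_sum_mul_sub_sq]
  simp only [← Finset.mul_sum, hbalance]
  ring

theorem posSemidef_diagonal_mul_add_transpose_mul_diagonal (L A : Matrix ι ι ℝ)
    (hA : ∀ i j, 0 ≤ A i j) (hL : L = diagonal (fun i => ∑ j, A i j) - A) (θ : ι → ℝ)
    (hθpos : ∀ i, 0 ≤ θ i) (hθ : θ ᵥ* L = 0) :
    (diagonal θ * L + Lᵀ * diagonal θ).PosSemidef := by
  subst hL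
  rw [← diagonal_transpose θ, ← transpose_mul, diagonal_transpose]
  refine posSemidef_add_transpose_of_dotProduct_mulVec_nonneg _ fun x => ?_
  have hsum := two_mul_dotProduct_diagonal_mul_mulVec_of_vecMul_eq_zero A θ hθ x
  have hnonneg : 0 ≤ ∑ i, ∑ j, θ i * A i j * (x i - x j) ^ 2 :=
    Finset.sum_nonneg fun i _ => Finset.sum_nonneg fun j _ =>
      mul_nonneg (mul_nonneg (hθpos i) (hA i j)) (sq_nonneg _)
  linarith

end Matrix

theorem stmt_1_general {N : ℕ} (L : Matrix (Fin N) (Fin N) ℝ)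
    (hL : IsLaplacianOfStronglyConnectedDigraph L)
    (θ : Fin N → ℝ) (hθpos : ∀ i, 0 < θ i) (hθL : Matrix.vecMul θ L = 0) :
    (Matrix.diagonal θ * L + Lᵀ * Matrix.diagonal θ).PosSemidef := by
  obtain ⟨A, hA, -, -, hLA⟩ := hL
  exact posSemidef_diagonal_mul_add_transpose_mul_diagonal L A hA hLA θ (fun i => (hθpos i).le) hθL

/-- With `Θ = diag θ` for the positive left null vector `θ` of `L` normalized by `θ 𝟏 = N`,
the matrix `ℒ = ΘL + LᵀΘ` is symmetric positive semi-definite. -/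
theorem stmt_1 {N : ℕ} (L : Matrix (Fin N) (Fin N) ℝ)
    (hL : IsLaplacianOfStronglyConnectedDigraph L)
    (θ : Fin N → ℝ) (hθpos : ∀ i, 0 < θ i) (hθL : Matrix.vecMul θ L = 0)
    (hθsum : ∑ i, θ i = (N : ℝ)) :
    (Matrix.diagonal θ * L + Lᵀ * Matrix.diagonal θ).PosSemidef :=
  stmt_1_general L hL θ hθpos hθL
end

section
/- Let A, C, E be real matrices of dimensions n×n, p×n, n×q, and γ > 0. The system ẋ = Ax + Ed, y = Cx is internally stable (A is Hurwitz) and its H₂ cost J = ∫₀^∞ tr[(Ce^{At}E)ᵀ(Ce^{At}E)] dt satisfies J < γ if and only if there exists a symmetric positive definite matrix P with AᵀP + PA + CᵀC < 0 and tr(EᵀPE) < γ. -/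
open Matrix

def IsHurwitz {m : Type*} [Fintype m] [DecidableEq m] (A : Matrix m m ℝ) : Prop :=
  ∀ μ ∈ spectrum ℂ (A.map Complex.ofReal), μ.re < 0

/-- `M < 0`: symmetric negative definite. -/
def NegDef {m : Type*} [Fintype m] (M : Matrix m m ℝ) : Prop := (-M).PosDef

/-- The H₂ cost `J = ∫₀^∞ tr[(C e^{At} E)ᵀ (C e^{At} E)] dt`. -/
noncomputable def H2Cost {n p q : ℕ} (A : Matrix (Fin n) (Fin n) ℝ)
    (C : Matrix (Fin p) (Fin n) ℝ) (E : Matrix (Fin n) (Fin q) ℝ) : ℝ :=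
  ∫ t in Set.Ioi (0 : ℝ),
    Matrix.trace ((C * NormedSpace.exp (t • A) * E)ᵀ * (C * NormedSpace.exp (t • A) * E))

namespace H2Aux

open MeasureTheory Filter Set NormedSpace
open scoped Topology ENNReal

set_option maxHeartbeats 1600000

attribute [local instance] Matrix.linftyOpNormedAddCommGroup Matrix.linftyOpNormedRing
  Matrix.linftyOpNormedAlgebra

noncomputable instance instTopMatR {n : ℕ} : TopologicalSpace (Matrix (Fin n) (Fin n) ℝ) :=
  (Matrix.linftyOpNormedAddCommGroup (m := Fin n) (n := Fin n) (α := ℝ)).toUniformSpace.toTopologicalSpace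

noncomputable instance instTopMatC {n : ℕ} : TopologicalSpace (Matrix (Fin n) (Fin n) ℂ) :=
  (Matrix.linftyOpNormedAddCommGroup (m := Fin n) (n := Fin n) (α := ℂ)).toUniformSpace.toTopologicalSpace

variable {n p q : ℕ}

/-- `e^{tA}`. -/
noncomputable def eM (A : Matrix (Fin n) (Fin n) ℝ) (t : ℝ) : Matrix (Fin n) (Fin n) ℝ :=
  exp (t • A)

/-- `e^{tAᵀ} M e^{tA}`. -/
noncomputable def Gm (A M : Matrix (Fin n) (Fin n) ℝ) (t : ℝ) : Matrix (Fin n) (Fin n) ℝ :=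
  eM Aᵀ t * M * eM A t

lemma eM_transpose (A : Matrix (Fin n) (Fin n) ℝ) (t : ℝ) : (eM A t)ᵀ = eM Aᵀ t := by
  rw [eM, eM, ← transpose_smul]
  exact (Matrix.exp_transpose _).symm

lemma eM_zero (A : Matrix (Fin n) (Fin n) ℝ) : eM A 0 = 1 := by
  simp [eM, exp_zero]

lemma Gm_zero (A M : Matrix (Fin n) (Fin n) ℝ) : Gm A M 0 = M := by
  simp [Gm, eM_zero]

lemma eM_hasDerivAt (A : Matrix (Fin n) (Fin n) ℝ) (t : ℝ) :
    HasDerivAt (eM A) (eM A t * A) t :=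
  hasDerivAt_exp_smul_const (𝕂 := ℝ) A t

lemma eM_hasDerivAt' (A : Matrix (Fin n) (Fin n) ℝ) (t : ℝ) :
    HasDerivAt (eM A) (A * eM A t) t :=
  hasDerivAt_exp_smul_const' (𝕂 := ℝ) A t

lemma eM_continuous (A : Matrix (Fin n) (Fin n) ℝ) : Continuous (eM A) :=
  continuous_iff_continuousAt.2 fun t => (eM_hasDerivAt A t).continuousAt

lemma Gm_hasDerivAt (A M : Matrix (Fin n) (Fin n) ℝ) (t : ℝ) :
    HasDerivAt (Gm A M) (Aᵀ * Gm A M t + Gm A M t * A) t := by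
  have h1 : HasDerivAt (fun t => eM Aᵀ t * M) (Aᵀ * eM Aᵀ t * M) t :=
    (eM_hasDerivAt' Aᵀ t).mul_const M
  have h2 := h1.mul (eM_hasDerivAt A t)
  have h3 : Aᵀ * Gm A M t + Gm A M t * A
      = Aᵀ * eM Aᵀ t * M * eM A t + eM Aᵀ t * M * (eM A t * A) := by
    simp only [Gm]
    noncomm_ring
  rw [h3]
  exact h2

lemma Gm_continuous (A M : Matrix (Fin n) (Fin n) ℝ) : Continuous (Gm A M) :=
  ((eM_continuous Aᵀ).mul continuous_const).mul (eM_continuous A)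

/-- real PSD has nonneg trace -/
lemma trace_nonneg {M : Matrix (Fin n) (Fin n) ℝ} (h : M.PosSemidef) : 0 ≤ M.trace := by
  rw [Matrix.trace]
  refine Finset.sum_nonneg fun i _ => ?_
  have := h.dotProduct_mulVec_nonneg (Pi.single i 1)
  simpa [dotProduct, Matrix.mulVec, Pi.single_apply] using this

lemma conj_psd {M : Matrix (Fin n) (Fin n) ℝ} (h : M.PosSemidef) (E : Matrix (Fin n) (Fin q) ℝ) :
    (Eᵀ * M * E).PosSemidef := by
  have := h.conjTranspose_mul_mul_same E
  simpa using this

/-- the scalar functional `X ↦ tr(Eᵀ X E)` as a CLM. -/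
noncomputable def trCLM (E : Matrix (Fin n) (Fin q) ℝ) :
    Matrix (Fin n) (Fin n) ℝ →L[ℝ] ℝ :=
  LinearMap.toContinuousLinearMap
    { toFun := fun X => (Eᵀ * X * E).trace
      map_add' := by intro X Y; simp [Matrix.mul_add, Matrix.add_mul, trace_add]
      map_smul' := by intro c X; simp [Matrix.mul_smul, Matrix.smul_mul] }

@[simp] lemma trCLM_apply (E : Matrix (Fin n) (Fin q) ℝ) (X : Matrix (Fin n) (Fin n) ℝ) :
    trCLM E X = (Eᵀ * X * E).trace := rfl

/-- quadratic form functional `X ↦ x ⬝ᵥ X *ᵥ x` as a CLM. -/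
noncomputable def qfCLM (x : Fin n → ℝ) : Matrix (Fin n) (Fin n) ℝ →L[ℝ] ℝ :=
  LinearMap.toContinuousLinearMap
    { toFun := fun X => x ⬝ᵥ X *ᵥ x
      map_add' := by intro X Y; simp [Matrix.add_mulVec, dotProduct_add]
      map_smul' := by intro c X; simp [Matrix.smul_mulVec, dotProduct_smul] }

@[simp] lemma qfCLM_apply (x : Fin n → ℝ) (X : Matrix (Fin n) (Fin n) ℝ) :
    qfCLM x X = x ⬝ᵥ X *ᵥ x := rfl

/-- Lyapunov operator `X ↦ Aᵀ X + X A` as a CLM. -/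
noncomputable def lyapCLM (A : Matrix (Fin n) (Fin n) ℝ) :
    Matrix (Fin n) (Fin n) ℝ →L[ℝ] Matrix (Fin n) (Fin n) ℝ :=
  LinearMap.toContinuousLinearMap
    { toFun := fun X => Aᵀ * X + X * A
      map_add' := by intro X Y; noncomm_ring
      map_smul' := by intro c X; simp [Matrix.mul_smul, Matrix.smul_mul] }

@[simp] lemma lyapCLM_apply (A X : Matrix (Fin n) (Fin n) ℝ) :
    lyapCLM A X = Aᵀ * X + X * A := rfl

/-- transpose as a CLM. -/
noncomputable def transCLM : Matrix (Fin n) (Fin n) ℝ →L[ℝ] Matrix (Fin n) (Fin n) ℝ :=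
  LinearMap.toContinuousLinearMap
    { toFun := fun X => Xᵀ
      map_add' := by intro X Y; simp
      map_smul' := by intro c X; simp }

@[simp] lemma transCLM_apply (X : Matrix (Fin n) (Fin n) ℝ) : transCLM X = Xᵀ := rfl

lemma spectrum_transpose (B : Matrix (Fin n) (Fin n) ℂ) : spectrum ℂ Bᵀ = spectrum ℂ B := by
  ext μ
  simp only [spectrum.mem_iff, not_iff_not, Matrix.isUnit_iff_isUnit_det]
  have : algebraMap ℂ (Matrix (Fin n) (Fin n) ℂ) μ - Bᵀ = (algebraMap ℂ _ μ - B)ᵀ := by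
    rw [transpose_sub, Algebra.algebraMap_eq_smul_one, transpose_smul, transpose_one]
  rw [this, det_transpose]

/-- Hurwitz is preserved by transpose. -/
lemma IsHurwitz.transpose {A : Matrix (Fin n) (Fin n) ℝ} (hA : IsHurwitz A) : IsHurwitz Aᵀ := by
  intro μ hμ
  apply hA
  rwa [Matrix.transpose_map, spectrum_transpose] at hμ

/-- Complex quadratic form of a real PosDef matrix has positive real part. -/
lemma posDef_complex_re {P : Matrix (Fin n) (Fin n) ℝ} (hP : P.PosDef) {v : Fin n → ℂ}
    (hv : v ≠ 0) : 0 < (star v ⬝ᵥ (P.map Complex.ofReal) *ᵥ v).re := by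
  set x : Fin n → ℝ := fun i => (v i).re with hx
  set y : Fin n → ℝ := fun i => (v i).im with hy
  have hre : (star v ⬝ᵥ (P.map Complex.ofReal) *ᵥ v).re = x ⬝ᵥ P *ᵥ x + y ⬝ᵥ P *ᵥ y := by
    simp only [dotProduct, Matrix.mulVec, Pi.star_apply, Matrix.map_apply, Finset.mul_sum,
      Complex.re_sum, ← Finset.sum_add_distrib]
    refine Finset.sum_congr rfl fun i _ => Finset.sum_congr rfl fun j _ => ?_
    simp only [Complex.star_def, Complex.mul_re, Complex.mul_im, Complex.conj_re,
      Complex.conj_im, Complex.ofReal_re, Complex.ofReal_im, hx, hy]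
    ring
  rw [hre]
  have hxy : x ≠ 0 ∨ y ≠ 0 := by
    by_contra hc
    push_neg at hc
    apply hv
    funext i
    have h1 : x i = 0 := by rw [hc.1]; rfl
    have h2 : y i = 0 := by rw [hc.2]; rfl
    exact Complex.ext h1 h2
  have hqx : 0 ≤ x ⬝ᵥ P *ᵥ x := by simpa using hP.posSemidef.dotProduct_mulVec_nonneg x
  have hqy : 0 ≤ y ⬝ᵥ P *ᵥ y := by simpa using hP.posSemidef.dotProduct_mulVec_nonneg y
  rcases hxy with hx0 | hy0
  · have : 0 < x ⬝ᵥ P *ᵥ x := by simpa using hP.dotProduct_mulVec_pos hx0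
    linarith
  · have : 0 < y ⬝ᵥ P *ᵥ y := by simpa using hP.dotProduct_mulVec_pos hy0
    linarith

lemma exists_eigenvector {B : Matrix (Fin n) (Fin n) ℂ} {μ : ℂ} (h : μ ∈ spectrum ℂ B) :
    ∃ v : Fin n → ℂ, v ≠ 0 ∧ B *ᵥ v = μ • v := by
  rw [spectrum.mem_iff, Matrix.isUnit_iff_isUnit_det, isUnit_iff_ne_zero, not_not] at h
  obtain ⟨v, hv0, hv⟩ := (Matrix.exists_mulVec_eq_zero_iff).2 h
  refine ⟨v, hv0, ?_⟩
  rw [Matrix.sub_mulVec, sub_eq_zero, Algebra.algebraMap_eq_smul_one,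
    Matrix.smul_mulVec, Matrix.one_mulVec] at hv
  exact hv.symm

lemma mapC_conjTranspose (M : Matrix (Fin n) (Fin n) ℝ) :
    (M.map Complex.ofReal)ᴴ = Mᵀ.map Complex.ofReal := by
  ext i j
  simp [conjTranspose_apply, Complex.conj_ofReal]

lemma linfty_norm_le {m' : ℕ} {M : Matrix (Fin n) (Fin m') ℝ} {b : ℝ} (hb : 0 ≤ b)
    (h : ∀ i, ∑ j, ‖M i j‖ ≤ b) : ‖M‖ ≤ b := by
  rw [Matrix.linfty_opNorm_def]
  have hsup : (Finset.univ.sup fun i => ∑ j, ‖M i j‖₊) ≤ b.toNNReal := by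
    refine Finset.sup_le fun i _ => ?_
    rw [← NNReal.coe_le_coe, NNReal.coe_sum, Real.coe_toNNReal _ hb]
    simpa using h i
  calc ((Finset.univ.sup fun i => ∑ j, ‖M i j‖₊ : NNReal) : ℝ)
      ≤ (b.toNNReal : ℝ) := NNReal.coe_le_coe.2 hsup
    _ = b := Real.coe_toNNReal _ hb

lemma eM_mapC (A : Matrix (Fin n) (Fin n) ℝ) (t : ℝ) :
    (eM A t).map Complex.ofReal = exp (t • A.map Complex.ofReal) := by
  have hc : Continuous fun M : Matrix (Fin n) (Fin n) ℝ =>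
      (Complex.ofRealHom.mapMatrix : Matrix (Fin n) (Fin n) ℝ →+* Matrix (Fin n) (Fin n) ℂ) M :=
    continuous_id.matrix_map Complex.continuous_ofReal
  have h2 : (Complex.ofRealHom.mapMatrix : Matrix (Fin n) (Fin n) ℝ →+*
      Matrix (Fin n) (Fin n) ℂ) (t • A) = t • A.map Complex.ofReal := by
    ext i j
    simp [RingHom.mapMatrix_apply, Complex.real_smul]
  calc (eM A t).map Complex.ofReal
      = (Complex.ofRealHom.mapMatrix : Matrix (Fin n) (Fin n) ℝ →+*
          Matrix (Fin n) (Fin n) ℂ) (exp (t • A)) := rfl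
    _ = exp ((Complex.ofRealHom.mapMatrix : Matrix (Fin n) (Fin n) ℝ →+*
          Matrix (Fin n) (Fin n) ℂ) (t • A)) := map_exp _ hc _
    _ = exp (t • A.map Complex.ofReal) := by rw [h2]

/-- single-term bound `t^j/j! ≤ exp (β t)/β^j`. -/
lemma pow_div_factorial_le {β t : ℝ} (hβ : 0 < β) (ht : 0 ≤ t) (j : ℕ) :
    t ^ j / (j.factorial : ℝ) ≤ Real.exp (β * t) / β ^ j := by
  rw [div_le_div_iff₀ (by positivity) (by positivity)]
  have h1 : (β * t) ^ j / (j.factorial : ℝ) ≤ Real.exp (β * t) := by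
    calc (β * t) ^ j / (j.factorial : ℝ)
        ≤ ∑ i ∈ Finset.range (j + 1), (β * t) ^ i / (i.factorial : ℝ) := by
          refine Finset.single_le_sum (f := fun i => (β * t) ^ i / (i.factorial : ℝ))
            (fun i _ => by positivity) (Finset.self_mem_range_succ j)
      _ ≤ Real.exp (β * t) := Real.sum_le_exp_of_nonneg (by positivity) _
  have h2 : (β * t) ^ j ≤ Real.exp (β * t) * (j.factorial : ℝ) := by
    rw [div_le_iff₀ (by positivity)] at h1
    linarith
  calc t ^ j * β ^ j = (β * t) ^ j := by rw [mul_pow]; ring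
    _ ≤ Real.exp (β * t) * (j.factorial : ℝ) := h2

/-- mulVec at a fixed vector, as a CLM on matrices. -/
noncomputable def mvCLM (w : Fin n → ℂ) :
    Matrix (Fin n) (Fin n) ℂ →L[ℂ] (Fin n → ℂ) :=
  LinearMap.toContinuousLinearMap
    { toFun := fun X => X *ᵥ w
      map_add' := by intro X Y; simp [Matrix.add_mulVec]
      map_smul' := by intro c X; simp [Matrix.smul_mulVec] }

@[simp] lemma mvCLM_apply (w : Fin n → ℂ) (X : Matrix (Fin n) (Fin n) ℂ) :
    mvCLM w X = X *ᵥ w := rfl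

/-- per-vector decay estimate. -/
lemma vec_decay {A : Matrix (Fin n) (Fin n) ℝ} (hA : IsHurwitz A) (v : Fin n → ℂ) :
    ∃ β c : ℝ, 0 < β ∧ 0 ≤ c ∧ ∀ t : ℝ, 0 ≤ t →
      ‖exp (t • A.map Complex.ofReal) *ᵥ v‖ ≤ c * Real.exp (-β * t) := by
  set B := A.map Complex.ofReal with hB
  set f : Module.End ℂ (Fin n → ℂ) := Matrix.toLinAlgEquiv' B with hf
  have htop : v ∈ ⨆ μ, f.maxGenEigenspace μ := by
    rw [Module.End.iSup_maxGenEigenspace_eq_top f]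
    trivial
  refine Submodule.iSup_induction (motive := fun w => ∃ β c : ℝ, 0 < β ∧ 0 ≤ c ∧ ∀ t : ℝ, 0 ≤ t →
      ‖exp (t • B) *ᵥ w‖ ≤ c * Real.exp (-β * t)) _ htop ?_ ?_ ?_
  · -- generalized eigenvectors
    intro μ w hw
    rcases eq_or_ne w 0 with rfl | hw0
    · exact ⟨1, 0, one_pos, le_refl 0, fun t ht => by simp⟩
    obtain ⟨k, hk⟩ := (Module.End.mem_maxGenEigenspace f μ w).1 hw
    set N : Matrix (Fin n) (Fin n) ℂ := B - μ • 1 with hN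
    have hfN : f - μ • 1 = Matrix.toLinAlgEquiv' N := by
      rw [hN, map_sub, _root_.map_smul, _root_.map_one]
    have hNk : ∀ m : ℕ, k ≤ m → N ^ m *ᵥ w = 0 := by
      have hbase : N ^ k *ᵥ w = 0 := by
        have h' : Matrix.toLinAlgEquiv' (N ^ k) w = 0 := by
          rw [map_pow, ← hfN]; exact hk
        exact h'
      intro m hm
      obtain ⟨d, rfl⟩ := Nat.exists_eq_add_of_le hm
      rw [add_comm, pow_add, ← Matrix.mulVec_mulVec, hbase, Matrix.mulVec_zero]
    -- μ is in the spectrum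
    have hμspec : μ ∈ spectrum ℂ B := by
      have hex : ∃ m : ℕ, N ^ m *ᵥ w = 0 := ⟨k, hNk k le_rfl⟩
      have h0 : Nat.find hex ≠ 0 := by
        intro h0
        have hsp := Nat.find_spec hex
        rw [h0, pow_zero, Matrix.one_mulVec] at hsp
        exact hw0 hsp
      obtain ⟨m, hm⟩ := Nat.exists_eq_succ_of_ne_zero h0
      set u := N ^ m *ᵥ w with hu
      have hu0 : u ≠ 0 := by
        intro h
        exact Nat.find_min hex (hm ▸ m.lt_succ_self) h
      have hNu : N *ᵥ u = 0 := by
        have hsp := Nat.find_spec hex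
        rw [hm, pow_succ', ← Matrix.mulVec_mulVec] at hsp
        exact hsp
      rw [spectrum.mem_iff, Matrix.isUnit_iff_isUnit_det, isUnit_iff_ne_zero, not_not]
      have hdetN : N.det = 0 := Matrix.exists_mulVec_eq_zero_iff.1 ⟨u, hu0, hNu⟩
      have halg : algebraMap ℂ (Matrix (Fin n) (Fin n) ℂ) μ - B = -N := by
        rw [hN, Algebra.algebraMap_eq_smul_one, neg_sub]
      rw [halg, Matrix.det_neg, hdetN, mul_zero]
    have hre : μ.re < 0 := hA μ hμspec
    set β : ℝ := -μ.re / 2 with hβdef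
    have hβ : 0 < β := by rw [hβdef]; linarith
    -- splitting of the exponential
    have hsplit : ∀ t : ℝ, exp (t • B) = Complex.exp (t * μ) • exp (t • N) := by
      intro t
      have hBsum : t • B = t • (μ • (1 : Matrix (Fin n) (Fin n) ℂ)) + t • N := by
        rw [hN, smul_sub]
        abel
      have hcomm : Commute (t • (μ • (1 : Matrix (Fin n) (Fin n) ℂ))) (t • N) :=
        (((Commute.one_left N).smul_left μ).smul_left t).smul_right t
      rw [hBsum, NormedSpace.exp_add_of_commute hcomm]
      have h1 : t • (μ • (1 : Matrix (Fin n) (Fin n) ℂ)) = ((t : ℂ) * μ) • 1 := by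
        rw [← smul_assoc, Complex.real_smul]
      have h2 : exp (((t : ℂ) * μ) • (1 : Matrix (Fin n) (Fin n) ℂ))
          = Complex.exp (t * μ) • 1 := by
        rw [← Algebra.algebraMap_eq_smul_one,
          ← map_exp (algebraMap ℂ (Matrix (Fin n) (Fin n) ℂ)) (continuous_algebraMap ℂ _)
            ((t : ℂ) * μ),
          Algebra.algebraMap_eq_smul_one, Complex.exp_eq_exp_ℂ]
      rw [h1, h2, smul_mul_assoc, one_mul]
    -- finite expansion of exp (t • N) *ᵥ w
    have hexpand : ∀ t : ℝ, exp (t • N) *ᵥ w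
        = ∑ j ∈ Finset.range k, ((j.factorial : ℂ))⁻¹ • (t ^ j • (N ^ j *ᵥ w)) := by
      intro t
      have hsum : exp (t • N) = ∑' j : ℕ, ((j.factorial : ℂ))⁻¹ • (t • N) ^ j :=
        congrFun (exp_eq_tsum (𝕂 := ℂ)) (t • N)
      have hmv : mvCLM w (exp (t • N))
          = ∑' j : ℕ, mvCLM w (((j.factorial : ℂ))⁻¹ • (t • N) ^ j) := by
        rw [hsum]
        exact (mvCLM w).map_tsum (expSeries_summable' (𝕂 := ℂ) (t • N))
      have hterm : ∀ j : ℕ, mvCLM w (((j.factorial : ℂ))⁻¹ • (t • N) ^ j)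
          = ((j.factorial : ℂ))⁻¹ • (t ^ j • (N ^ j *ᵥ w)) := by
        intro j
        rw [_root_.map_smul]
        congr 1
        rw [smul_pow]
        simp [Matrix.smul_mulVec]
      have hvanish : ∀ j ∉ Finset.range k,
          mvCLM w (((j.factorial : ℂ))⁻¹ • (t • N) ^ j) = 0 := by
        intro j hj
        rw [hterm j, hNk j (by simpa using hj), smul_zero, smul_zero]
      calc exp (t • N) *ᵥ w = mvCLM w (exp (t • N)) := rfl
        _ = ∑ j ∈ Finset.range k, mvCLM w (((j.factorial : ℂ))⁻¹ • (t • N) ^ j) := by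
            rw [hmv, tsum_eq_sum hvanish]
        _ = _ := Finset.sum_congr rfl fun j _ => hterm j
    refine ⟨β, ∑ j ∈ Finset.range k, ‖N ^ j *ᵥ w‖ / β ^ j, hβ,
      Finset.sum_nonneg fun j _ => by positivity, fun t ht => ?_⟩
    have hnorm1 : ‖exp (t • B) *ᵥ w‖
        = Real.exp (t * μ.re) * ‖exp (t • N) *ᵥ w‖ := by
      rw [hsplit t, Matrix.smul_mulVec, norm_smul,
        Complex.norm_exp]
      congr 2
      simp
    have hnorm2 : ‖exp (t • N) *ᵥ w‖
        ≤ ∑ j ∈ Finset.range k, (t ^ j / (j.factorial : ℝ)) * ‖N ^ j *ᵥ w‖ := by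
      rw [hexpand t]
      refine (norm_sum_le _ _).trans (Finset.sum_le_sum fun j _ => ?_)
      rw [norm_smul, norm_smul, norm_inv, Complex.norm_natCast, Real.norm_eq_abs,
        abs_pow, abs_of_nonneg ht]
      rw [div_eq_inv_mul, mul_assoc]
    have hbound : ∀ j ∈ Finset.range k,
        (t ^ j / (j.factorial : ℝ)) * ‖N ^ j *ᵥ w‖
          ≤ (‖N ^ j *ᵥ w‖ / β ^ j) * Real.exp (β * t) := by
      intro j _
      have h1 := pow_div_factorial_le hβ ht j
      have h2 : (0:ℝ) ≤ ‖N ^ j *ᵥ w‖ := norm_nonneg _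
      calc (t ^ j / (j.factorial : ℝ)) * ‖N ^ j *ᵥ w‖
          ≤ (Real.exp (β * t) / β ^ j) * ‖N ^ j *ᵥ w‖ :=
            mul_le_mul_of_nonneg_right h1 h2
        _ = (‖N ^ j *ᵥ w‖ / β ^ j) * Real.exp (β * t) := by ring
    have hfin : ‖exp (t • B) *ᵥ w‖
        ≤ Real.exp (t * μ.re) * ((∑ j ∈ Finset.range k, ‖N ^ j *ᵥ w‖ / β ^ j)
            * Real.exp (β * t)) := by
      rw [hnorm1]
      refine mul_le_mul_of_nonneg_left ?_ (Real.exp_nonneg _)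
      calc ‖exp (t • N) *ᵥ w‖
          ≤ ∑ j ∈ Finset.range k, (t ^ j / (j.factorial : ℝ)) * ‖N ^ j *ᵥ w‖ := hnorm2
        _ ≤ ∑ j ∈ Finset.range k, (‖N ^ j *ᵥ w‖ / β ^ j) * Real.exp (β * t) :=
            Finset.sum_le_sum hbound
        _ = (∑ j ∈ Finset.range k, ‖N ^ j *ᵥ w‖ / β ^ j) * Real.exp (β * t) := by
            rw [Finset.sum_mul]
    refine hfin.trans (le_of_eq ?_)
    have hexps : Real.exp (t * μ.re) * Real.exp (β * t) = Real.exp (-β * t) := by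
      rw [← Real.exp_add]
      congr 1
      rw [hβdef]; ring
    calc Real.exp (t * μ.re)
          * ((∑ j ∈ Finset.range k, ‖N ^ j *ᵥ w‖ / β ^ j) * Real.exp (β * t))
        = (∑ j ∈ Finset.range k, ‖N ^ j *ᵥ w‖ / β ^ j)
          * (Real.exp (t * μ.re) * Real.exp (β * t)) := by ring
      _ = _ := by rw [hexps]
  · exact ⟨1, 0, one_pos, le_refl 0, fun t ht => by simp⟩
  · rintro w₁ w₂ ⟨β₁, c₁, hβ₁, hc₁, h₁⟩ ⟨β₂, c₂, hβ₂, hc₂, h₂⟩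
    refine ⟨min β₁ β₂, c₁ + c₂, lt_min hβ₁ hβ₂, by positivity, fun t ht => ?_⟩
    have e1 : Real.exp (-β₁ * t) ≤ Real.exp (-(min β₁ β₂) * t) := by
      apply Real.exp_le_exp.2
      have := min_le_left β₁ β₂
      nlinarith
    have e2 : Real.exp (-β₂ * t) ≤ Real.exp (-(min β₁ β₂) * t) := by
      apply Real.exp_le_exp.2
      have := min_le_right β₁ β₂
      nlinarith
    calc ‖exp (t • B) *ᵥ (w₁ + w₂)‖ ≤ ‖exp (t • B) *ᵥ w₁‖ + ‖exp (t • B) *ᵥ w₂‖ := by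
          rw [Matrix.mulVec_add]; exact norm_add_le _ _
      _ ≤ c₁ * Real.exp (-β₁ * t) + c₂ * Real.exp (-β₂ * t) := add_le_add (h₁ t ht) (h₂ t ht)
      _ ≤ c₁ * Real.exp (-(min β₁ β₂) * t) + c₂ * Real.exp (-(min β₁ β₂) * t) :=
          add_le_add (mul_le_mul_of_nonneg_left e1 hc₁) (mul_le_mul_of_nonneg_left e2 hc₂)
      _ = (c₁ + c₂) * Real.exp (-(min β₁ β₂) * t) := by ring

/-- Key decay estimate. -/
lemma decay {A : Matrix (Fin n) (Fin n) ℝ} (hA : IsHurwitz A) :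
    ∃ K β : ℝ, 0 < β ∧ ∀ t : ℝ, 0 ≤ t → ‖eM A t‖ ≤ K * Real.exp (-β * t) := by
  set B := A.map Complex.ofReal with hB
  rcases isEmpty_or_nonempty (Fin n) with hice | hne
  · refine ⟨1, 1, one_pos, fun t ht => ?_⟩
    have hzero : eM A t = 0 := Subsingleton.elim _ _
    rw [hzero, norm_zero]
    positivity
  · have hch : ∀ j : Fin n, ∃ β c : ℝ, 0 < β ∧ 0 ≤ c ∧ ∀ t : ℝ, 0 ≤ t →
        ‖exp (t • B) *ᵥ Pi.single j 1‖ ≤ c * Real.exp (-β * t) :=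
      fun j => vec_decay hA (Pi.single j 1)
    choose βf cf hβf hcf hbf using hch
    set β : ℝ := Finset.univ.inf' Finset.univ_nonempty βf with hβdef
    have hβpos : 0 < β := by
      rw [hβdef]
      exact (Finset.lt_inf'_iff _).2 fun j _ => hβf j
    refine ⟨∑ j, cf j, β, hβpos, fun t ht => ?_⟩
    have hβle : ∀ j : Fin n, Real.exp (-βf j * t) ≤ Real.exp (-β * t) := by
      intro j
      apply Real.exp_le_exp.2
      have : β ≤ βf j := Finset.inf'_le _ (Finset.mem_univ j)
      nlinarith
    refine linfty_norm_le (mul_nonneg (Finset.sum_nonneg fun j _ => hcf j) (Real.exp_nonneg _)) fun i => ?_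
    have hentry : ∀ j, ‖eM A t i j‖ ≤ cf j * Real.exp (-βf j * t) := by
      intro j
      have h1 : ((eM A t i j : ℝ) : ℂ) = (exp (t • B) *ᵥ Pi.single j 1) i := by
        rw [← eM_mapC]
        simp [Matrix.mulVec_single, Matrix.map_apply]
      have h2 : ‖eM A t i j‖ = ‖(exp (t • B) *ᵥ Pi.single j 1) i‖ := by
        rw [← h1, Complex.norm_real]
      rw [h2]
      exact (norm_le_pi_norm _ i).trans (hbf j t ht)
    calc ∑ j, ‖eM A t i j‖ ≤ ∑ j, cf j * Real.exp (-βf j * t) :=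
          Finset.sum_le_sum fun j _ => hentry j
      _ ≤ ∑ j, cf j * Real.exp (-β * t) :=
          Finset.sum_le_sum fun j _ => mul_le_mul_of_nonneg_left (hβle j) (hcf j)
      _ = (∑ j, cf j) * Real.exp (-β * t) := by rw [Finset.sum_mul]


/-- Lyapunov inequality implies Hurwitz. -/
lemma hurwitz_of_lyap {A P S : Matrix (Fin n) (Fin n) ℝ} (hP : P.PosDef) (hS : S.PosDef)
    (h : Aᵀ * P + P * A = -S) : IsHurwitz A := by
  intro μ hμ
  obtain ⟨v, hv0, hv⟩ := exists_eigenvector hμ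
  set B := A.map Complex.ofReal with hB
  set Pc := P.map Complex.ofReal with hPc
  set Sc := S.map Complex.ofReal with hSc
  set pv := star v ⬝ᵥ Pc *ᵥ v with hpv
  set sv := star v ⬝ᵥ Sc *ᵥ v with hsv
  have hmapmul : ∀ M N : Matrix (Fin n) (Fin n) ℝ,
      (M * N).map Complex.ofReal = M.map Complex.ofReal * N.map Complex.ofReal := fun M N => by
    ext i j
    simp only [Matrix.map_apply, Matrix.mul_apply]
    push_cast
    rfl
  have key : star v ⬝ᵥ ((Aᵀ * P + P * A).map Complex.ofReal) *ᵥ v = (starRingEnd ℂ μ + μ) * pv := by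
    have hadd : (Aᵀ * P + P * A).map Complex.ofReal
        = Aᵀ.map Complex.ofReal * Pc + Pc * B := by
      have : (Aᵀ * P + P * A).map Complex.ofReal
          = (Aᵀ * P).map Complex.ofReal + (P * A).map Complex.ofReal := by
        ext i j; simp
      rw [this, hmapmul, hmapmul]
    rw [hadd, Matrix.add_mulVec, dotProduct_add]
    have h1 : star v ⬝ᵥ (Aᵀ.map Complex.ofReal * Pc) *ᵥ v = starRingEnd ℂ μ * pv := by
      rw [← mapC_conjTranspose, ← Matrix.mulVec_mulVec, Matrix.dotProduct_mulVec,
        ← Matrix.star_mulVec, hv]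
      rw [star_smul, smul_dotProduct, hpv, Matrix.dotProduct_mulVec, smul_eq_mul]
      rfl
    have h2 : star v ⬝ᵥ (Pc * B) *ᵥ v = μ * pv := by
      rw [← Matrix.mulVec_mulVec, hv, Matrix.mulVec_smul, dotProduct_smul, hpv,
        smul_eq_mul]
    rw [h1, h2]; ring
  have hneg : star v ⬝ᵥ ((Aᵀ * P + P * A).map Complex.ofReal) *ᵥ v = -sv := by
    rw [h]
    have : (-S).map Complex.ofReal = -Sc := by ext i j; simp [hSc]
    rw [this, Matrix.neg_mulVec, dotProduct_neg]
  have heq : (starRingEnd ℂ μ + μ) * pv = -sv := by rw [← key, hneg]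
  have hre : 2 * μ.re * pv.re = -sv.re := by
    have h2 : starRingEnd ℂ μ + μ = ((2 * μ.re : ℝ) : ℂ) := by
      rw [add_comm, Complex.add_conj]
    have := congrArg Complex.re heq
    rw [h2, Complex.re_ofReal_mul] at this
    simpa using this
  have hp : 0 < pv.re := posDef_complex_re hP hv0
  have hs : 0 < sv.re := posDef_complex_re hS hv0
  nlinarith

lemma dot_self_pos {x : Fin n → ℝ} (hx : x ≠ 0) : 0 < x ⬝ᵥ x := by
  have h := (dotProduct_star_self_pos_iff (v := x)).2 hx
  rwa [show star x = x from funext fun i => star_trivial _] at h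

lemma herm_of_symm {M : Matrix (Fin n) (Fin n) ℝ} (h : Mᵀ = M) : M.IsHermitian := by
  show Mᴴ = M
  rw [Matrix.conjTranspose_eq_transpose_of_trivial, h]

lemma qf_psd {M : Matrix (Fin n) (Fin n) ℝ} (h : M.PosSemidef) (x : Fin n → ℝ) :
    0 ≤ x ⬝ᵥ M *ᵥ x := by
  have h2 := h.dotProduct_mulVec_nonneg x
  rwa [show star x = x from funext fun i => star_trivial _] at h2

lemma qf_pd {M : Matrix (Fin n) (Fin n) ℝ} (h : M.PosDef) {x : Fin n → ℝ} (hx : x ≠ 0) :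
    0 < x ⬝ᵥ M *ᵥ x := by
  have h2 := h.dotProduct_mulVec_pos hx
  rwa [show star x = x from funext fun i => star_trivial _] at h2

lemma posDef_of {M : Matrix (Fin n) (Fin n) ℝ} (hH : Mᵀ = M)
    (h : ∀ x, x ≠ 0 → 0 < x ⬝ᵥ M *ᵥ x) : M.PosDef := by
  refine Matrix.PosDef.of_dotProduct_mulVec_pos (herm_of_symm hH) fun x hx => ?_
  rw [show star x = x from funext fun i => star_trivial _]
  exact h x hx

lemma posSemidef_of {M : Matrix (Fin n) (Fin n) ℝ} (hH : Mᵀ = M)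
    (h : ∀ x, 0 ≤ x ⬝ᵥ M *ᵥ x) : M.PosSemidef := by
  refine Matrix.PosSemidef.of_dotProduct_mulVec_nonneg (herm_of_symm hH) fun x => ?_
  rw [show star x = x from funext fun i => star_trivial _]
  exact h x

lemma ctct_psd (C : Matrix (Fin p) (Fin n) ℝ) : (Cᵀ * C).PosSemidef := by
  rw [← Matrix.conjTranspose_eq_transpose_of_trivial]
  exact Matrix.posSemidef_conjTranspose_mul_self C

lemma Gm_psd {M : Matrix (Fin n) (Fin n) ℝ} (hM : M.PosSemidef)
    (A : Matrix (Fin n) (Fin n) ℝ) (t : ℝ) : (Gm A M t).PosSemidef := by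
  have h := hM.conjTranspose_mul_mul_same (eM A t)
  rwa [Matrix.conjTranspose_eq_transpose_of_trivial, eM_transpose] at h

lemma Gm_transpose {M : Matrix (Fin n) (Fin n) ℝ} (hM : Mᵀ = M)
    (A : Matrix (Fin n) (Fin n) ℝ) (t : ℝ) : (Gm A M t)ᵀ = Gm A M t := by
  rw [Gm, Matrix.transpose_mul, Matrix.transpose_mul, eM_transpose, eM_transpose,
    Matrix.transpose_transpose, hM, ← Matrix.mul_assoc]

lemma Gm_add (A M₁ M₂ : Matrix (Fin n) (Fin n) ℝ) (t : ℝ) :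
    Gm A (M₁ + M₂) t = Gm A M₁ t + Gm A M₂ t := by
  simp [Gm, Matrix.add_mul, Matrix.mul_add]

lemma Gm_neg (A M : Matrix (Fin n) (Fin n) ℝ) (t : ℝ) : Gm A (-M) t = -(Gm A M t) := by
  simp [Gm]

lemma Gm_lyap_eq (A M : Matrix (Fin n) (Fin n) ℝ) (t : ℝ) :
    Aᵀ * Gm A M t + Gm A M t * A = Gm A (Aᵀ * M + M * A) t := by
  have h1 : Aᵀ * eM Aᵀ t = eM Aᵀ t * Aᵀ :=
    (((Commute.refl Aᵀ).smul_right t).exp_right).eq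
  have h2 : eM A t * A = A * eM A t :=
    ((((Commute.refl A).smul_right t).exp_right).eq).symm
  rw [Gm, Gm, Matrix.mul_add, Matrix.add_mul]
  congr 1
  · rw [← Matrix.mul_assoc, ← Matrix.mul_assoc, h1, Matrix.mul_assoc (eM Aᵀ t) Aᵀ M]
  · rw [Matrix.mul_assoc (eM Aᵀ t * M) (eM A t) A, h2, ← Matrix.mul_assoc,
      Matrix.mul_assoc (eM Aᵀ t) M A]

lemma integrand_eq (A : Matrix (Fin n) (Fin n) ℝ) (C : Matrix (Fin p) (Fin n) ℝ)
    (E : Matrix (Fin n) (Fin q) ℝ) (t : ℝ) :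
    Matrix.trace ((C * NormedSpace.exp (t • A) * E)ᵀ * (C * NormedSpace.exp (t • A) * E))
      = trCLM E (Gm A (Cᵀ * C) t) := by
  show Matrix.trace ((C * eM A t * E)ᵀ * (C * eM A t * E)) = _
  simp only [trCLM_apply, Gm, Matrix.transpose_mul, eM_transpose, Matrix.mul_assoc]

lemma K_nonneg {A : Matrix (Fin n) (Fin n) ℝ} {K β : ℝ}
    (h : ∀ t : ℝ, 0 ≤ t → ‖eM A t‖ ≤ K * Real.exp (-β * t)) : 0 ≤ K := by
  have h0 := h 0 le_rfl
  simp only [mul_zero, neg_zero, Real.exp_zero, mul_one] at h0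
  exact le_trans (norm_nonneg _) h0

lemma gram_integrable {A : Matrix (Fin n) (Fin n) ℝ} (hA : IsHurwitz A)
    (M : Matrix (Fin n) (Fin n) ℝ) : IntegrableOn (Gm A M) (Ioi (0:ℝ)) := by
  obtain ⟨K₁, β₁, hβ₁, h₁⟩ := decay hA
  obtain ⟨K₂, β₂, hβ₂, h₂⟩ := decay (IsHurwitz.transpose hA)
  have hK₁ : 0 ≤ K₁ := K_nonneg h₁
  have hK₂ : 0 ≤ K₂ := K_nonneg h₂
  refine Integrable.mono'
    (g := fun t => K₂ * ‖M‖ * K₁ * Real.exp (-(β₁ + β₂) * t)) ?_ ?_ ?_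
  · exact ((exp_neg_integrableOn_Ioi 0 (by positivity)).const_mul _)
  · exact (Gm_continuous A M).aestronglyMeasurable
  · filter_upwards [ae_restrict_mem measurableSet_Ioi] with t ht
    have ht' : (0:ℝ) ≤ t := le_of_lt ht
    have hee : Real.exp (-β₂ * t) * Real.exp (-β₁ * t) = Real.exp (-(β₁ + β₂) * t) := by
      rw [← Real.exp_add]; congr 1; ring
    calc ‖Gm A M t‖ ≤ ‖eM Aᵀ t * M‖ * ‖eM A t‖ := norm_mul_le _ _
      _ ≤ (‖eM Aᵀ t‖ * ‖M‖) * ‖eM A t‖ :=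
          mul_le_mul_of_nonneg_right (norm_mul_le _ _) (norm_nonneg _)
      _ ≤ ((K₂ * Real.exp (-β₂ * t)) * ‖M‖) * (K₁ * Real.exp (-β₁ * t)) := by
          refine mul_le_mul (mul_le_mul_of_nonneg_right (h₂ t ht') (norm_nonneg _))
            (h₁ t ht') (norm_nonneg _) ?_
          positivity
      _ = (K₂ * ‖M‖ * K₁) * (Real.exp (-β₂ * t) * Real.exp (-β₁ * t)) := by ring
      _ = K₂ * ‖M‖ * K₁ * Real.exp (-(β₁ + β₂) * t) := by rw [hee]

lemma gram_tendsto {A : Matrix (Fin n) (Fin n) ℝ} (hA : IsHurwitz A)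
    (M : Matrix (Fin n) (Fin n) ℝ) : Tendsto (Gm A M) atTop (𝓝 0) := by
  obtain ⟨K₁, β₁, hβ₁, h₁⟩ := decay hA
  obtain ⟨K₂, β₂, hβ₂, h₂⟩ := decay (IsHurwitz.transpose hA)
  have hK₁ : 0 ≤ K₁ := K_nonneg h₁
  have hK₂ : 0 ≤ K₂ := K_nonneg h₂
  have h0 : Tendsto (fun t : ℝ => Real.exp (-(β₁ + β₂) * t)) atTop (𝓝 0) :=
    Real.tendsto_exp_atBot.comp ((tendsto_id (α := ℝ)).const_mul_atTop_of_neg (by linarith))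
  have hg : Tendsto (fun t : ℝ => K₂ * ‖M‖ * K₁ * Real.exp (-(β₁ + β₂) * t)) atTop (𝓝 0) := by
    have := h0.const_mul (K₂ * ‖M‖ * K₁)
    simpa using this
  refine squeeze_zero_norm' ?_ hg
  filter_upwards [eventually_ge_atTop (0:ℝ)] with t ht'
  have hee : Real.exp (-β₂ * t) * Real.exp (-β₁ * t) = Real.exp (-(β₁ + β₂) * t) := by
    rw [← Real.exp_add]; congr 1; ring
  calc ‖Gm A M t‖ ≤ ‖eM Aᵀ t * M‖ * ‖eM A t‖ := norm_mul_le _ _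
    _ ≤ (‖eM Aᵀ t‖ * ‖M‖) * ‖eM A t‖ :=
        mul_le_mul_of_nonneg_right (norm_mul_le _ _) (norm_nonneg _)
    _ ≤ ((K₂ * Real.exp (-β₂ * t)) * ‖M‖) * (K₁ * Real.exp (-β₁ * t)) := by
        refine mul_le_mul (mul_le_mul_of_nonneg_right (h₂ t ht') (norm_nonneg _))
          (h₁ t ht') (norm_nonneg _) ?_
        positivity
    _ = (K₂ * ‖M‖ * K₁) * (Real.exp (-β₂ * t) * Real.exp (-β₁ * t)) := by ring
    _ = K₂ * ‖M‖ * K₁ * Real.exp (-(β₁ + β₂) * t) := by rw [hee]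

lemma gram_deriv_integrable {A : Matrix (Fin n) (Fin n) ℝ} (hA : IsHurwitz A)
    (M : Matrix (Fin n) (Fin n) ℝ) :
    IntegrableOn (fun t => Aᵀ * Gm A M t + Gm A M t * A) (Ioi (0:ℝ)) := by
  have h := (lyapCLM A).integrable_comp (gram_integrable hA M)
  simp only [lyapCLM_apply] at h
  exact h

lemma gram_lyap {A : Matrix (Fin n) (Fin n) ℝ} (hA : IsHurwitz A)
    (M : Matrix (Fin n) (Fin n) ℝ) :
    Aᵀ * (∫ t in Ioi (0:ℝ), Gm A M t) + (∫ t in Ioi (0:ℝ), Gm A M t) * A = -M := by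
  have key : ∫ t in Ioi (0:ℝ), (Aᵀ * Gm A M t + Gm A M t * A) = 0 - Gm A M 0 :=
    integral_Ioi_of_hasDerivAt_of_tendsto' (fun x _ => Gm_hasDerivAt A M x)
      (gram_deriv_integrable hA M) (gram_tendsto hA M)
  have hswap : ∫ t in Ioi (0:ℝ), (Aᵀ * Gm A M t + Gm A M t * A)
      = Aᵀ * (∫ t in Ioi (0:ℝ), Gm A M t) + (∫ t in Ioi (0:ℝ), Gm A M t) * A := by
    have h := (lyapCLM A).integral_comp_comm (gram_integrable hA M)
    simpa using h
  rw [← hswap, key, Gm_zero, zero_sub]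

lemma forward {A : Matrix (Fin n) (Fin n) ℝ} {C : Matrix (Fin p) (Fin n) ℝ}
    {E : Matrix (Fin n) (Fin q) ℝ} {γ : ℝ} (hA : IsHurwitz A) (hJ : H2Cost A C E < γ) :
    ∃ P : Matrix (Fin n) (Fin n) ℝ, P.PosDef ∧
      NegDef (Aᵀ * P + P * A + Cᵀ * C) ∧ Matrix.trace (Eᵀ * P * E) < γ := by
  set Q := ∫ t in Ioi (0:ℝ), Gm A (Cᵀ * C) t with hQdef
  set W := ∫ t in Ioi (0:ℝ), Gm A (1 : Matrix (Fin n) (Fin n) ℝ) t with hWdef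
  have hQint := gram_integrable hA (Cᵀ * C)
  have hWint := gram_integrable hA (1 : Matrix (Fin n) (Fin n) ℝ)
  have hQlyap : Aᵀ * Q + Q * A = -(Cᵀ * C) := gram_lyap hA _
  have hWlyap : Aᵀ * W + W * A = -(1 : Matrix (Fin n) (Fin n) ℝ) := gram_lyap hA _
  -- H2Cost equals trace (Eᵀ Q E)
  have hH2 : H2Cost A C E = (Eᵀ * Q * E).trace := by
    have h1 : H2Cost A C E = ∫ t in Ioi (0:ℝ), trCLM E (Gm A (Cᵀ * C) t) := by
      unfold H2Cost
      exact integral_congr_ae (Eventually.of_forall fun t => integrand_eq A C E t)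
    rw [h1, ContinuousLinearMap.integral_comp_comm (trCLM E) hQint]
    rfl
  -- symmetry of Q and W
  have hsymm : ∀ M : Matrix (Fin n) (Fin n) ℝ, Mᵀ = M →
      (∫ t in Ioi (0:ℝ), Gm A M t)ᵀ = ∫ t in Ioi (0:ℝ), Gm A M t := by
    intro M hM
    calc (∫ t in Ioi (0:ℝ), Gm A M t)ᵀ
        = transCLM (∫ t in Ioi (0:ℝ), Gm A M t) := rfl
      _ = ∫ t in Ioi (0:ℝ), transCLM (Gm A M t) :=
          (ContinuousLinearMap.integral_comp_comm transCLM (gram_integrable hA M)).symm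
      _ = ∫ t in Ioi (0:ℝ), Gm A M t :=
          integral_congr_ae (Eventually.of_forall fun t => by
            simp [Gm_transpose hM A t])
  have hQt : Qᵀ = Q := hsymm _ (by rw [Matrix.transpose_mul, Matrix.transpose_transpose])
  have hWt : Wᵀ = W := hsymm _ Matrix.transpose_one
  -- quadratic forms
  have hqf : ∀ (M : Matrix (Fin n) (Fin n) ℝ) (x : Fin n → ℝ),
      x ⬝ᵥ (∫ t in Ioi (0:ℝ), Gm A M t) *ᵥ x
        = ∫ t in Ioi (0:ℝ), x ⬝ᵥ Gm A M t *ᵥ x := by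
    intro M x
    calc x ⬝ᵥ (∫ t in Ioi (0:ℝ), Gm A M t) *ᵥ x
        = qfCLM x (∫ t in Ioi (0:ℝ), Gm A M t) := rfl
      _ = ∫ t in Ioi (0:ℝ), qfCLM x (Gm A M t) :=
          (ContinuousLinearMap.integral_comp_comm (qfCLM x) (gram_integrable hA M)).symm
      _ = _ := rfl
  have hQpsd : ∀ x : Fin n → ℝ, 0 ≤ x ⬝ᵥ Q *ᵥ x := by
    intro x
    rw [hQdef, hqf]
    exact setIntegral_nonneg measurableSet_Ioi fun t _ => qf_psd (Gm_psd (ctct_psd C) A t) x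
  have hWpd : ∀ x : Fin n → ℝ, x ≠ 0 → 0 < x ⬝ᵥ W *ᵥ x := by
    intro x hx
    rw [hWdef, hqf]
    have hpos : ∀ t : ℝ, 0 < x ⬝ᵥ Gm A (1 : Matrix (Fin n) (Fin n) ℝ) t *ᵥ x := by
      intro t
      have hux : eM A t *ᵥ x ≠ 0 := by
        intro h
        apply hx
        obtain ⟨u, hu⟩ := Matrix.isUnit_exp (t • A)
        have hux2 : (↑u : Matrix (Fin n) (Fin n) ℝ) *ᵥ x = 0 := by rw [hu]; exact h
        calc x = ((↑u⁻¹ : Matrix (Fin n) (Fin n) ℝ) * ↑u) *ᵥ x := by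
              rw [Units.inv_mul, Matrix.one_mulVec]
          _ = (↑u⁻¹ : Matrix (Fin n) (Fin n) ℝ) *ᵥ ((↑u : Matrix (Fin n) (Fin n) ℝ) *ᵥ x) :=
              (Matrix.mulVec_mulVec _ _ _).symm
          _ = 0 := by rw [hux2, Matrix.mulVec_zero]
      have heq : x ⬝ᵥ Gm A (1 : Matrix (Fin n) (Fin n) ℝ) t *ᵥ x
          = (eM A t *ᵥ x) ⬝ᵥ (eM A t *ᵥ x) := by
        rw [Gm, Matrix.mul_one, ← Matrix.mulVec_mulVec, ← eM_transpose,
          Matrix.dotProduct_mulVec, Matrix.vecMul_transpose]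
      rw [heq]
      exact dot_self_pos hux
    have hfint : IntegrableOn (fun t => x ⬝ᵥ Gm A (1 : Matrix (Fin n) (Fin n) ℝ) t *ᵥ x)
        (Ioi (0:ℝ)) := by
      have h := (qfCLM x).integrable_comp hWint
      simp only [qfCLM_apply] at h
      exact h
    refine (setIntegral_pos_iff_support_of_nonneg_ae ?_ hfint).2 ?_
    · filter_upwards [ae_restrict_mem measurableSet_Ioi] with t _ using le_of_lt (hpos t)
    · have hsub : Ioi (0:ℝ) ⊆ Function.support
          (fun t => x ⬝ᵥ Gm A (1 : Matrix (Fin n) (Fin n) ℝ) t *ᵥ x) ∩ Ioi 0 :=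
        fun t ht => ⟨ne_of_gt (hpos t), ht⟩
      calc (0:ℝ≥0∞) < volume (Ioi (0:ℝ)) := by rw [Real.volume_Ioi]; exact ENNReal.zero_lt_top
        _ ≤ _ := measure_mono hsub
  -- the trace of Eᵀ W E is nonnegative
  have hWpsd : W.PosSemidef := posSemidef_of hWt fun x => by
    rcases eq_or_ne x 0 with rfl | hx
    · simp
    · exact le_of_lt (hWpd x hx)
  have hw : 0 ≤ (Eᵀ * W * E).trace := trace_nonneg (conj_psd hWpsd E)
  set w := (Eᵀ * W * E).trace with hwdef
  set ε := (γ - H2Cost A C E) / (w + 1) with hεdef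
  have hε : 0 < ε := by
    apply div_pos (by linarith) (by linarith)
  refine ⟨Q + ε • W, ?_, ?_, ?_⟩
  · -- positive definiteness
    refine posDef_of ?_ fun x hx => ?_
    · rw [Matrix.transpose_add, Matrix.transpose_smul, hQt, hWt]
    · rw [Matrix.add_mulVec, dotProduct_add, Matrix.smul_mulVec, dotProduct_smul,
        smul_eq_mul]
      have h1 := hQpsd x
      have h2 := hWpd x hx
      nlinarith
  · -- Lyapunov inequality
    have hPLyap : Aᵀ * (Q + ε • W) + (Q + ε • W) * A + Cᵀ * C
        = -(ε • (1 : Matrix (Fin n) (Fin n) ℝ)) := by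
      have hexp : Aᵀ * (Q + ε • W) + (Q + ε • W) * A + Cᵀ * C
          = (Aᵀ * Q + Q * A) + ε • (Aᵀ * W + W * A) + Cᵀ * C := by
        rw [Matrix.mul_add, Matrix.add_mul, Matrix.mul_smul, Matrix.smul_mul, smul_add]
        abel
      rw [hexp, hQlyap, hWlyap, smul_neg]
      abel
    rw [NegDef, hPLyap, neg_neg]
    refine posDef_of ?_ fun x hx => ?_
    · rw [Matrix.transpose_smul, Matrix.transpose_one]
    · rw [Matrix.smul_mulVec, Matrix.one_mulVec, dotProduct_smul, smul_eq_mul]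
      exact mul_pos hε (dot_self_pos hx)
  · -- trace bound
    have hexp : (Eᵀ * (Q + ε • W) * E).trace = (Eᵀ * Q * E).trace + ε * w := by
      rw [Matrix.mul_add, Matrix.add_mul, Matrix.mul_smul, Matrix.smul_mul,
        Matrix.trace_add, Matrix.trace_smul, smul_eq_mul, hwdef]
    rw [hexp, ← hH2]
    have hcancel : ε * (w + 1) = γ - H2Cost A C E := by
      rw [hεdef]
      field_simp
    nlinarith

lemma backward {A : Matrix (Fin n) (Fin n) ℝ} {C : Matrix (Fin p) (Fin n) ℝ}
    {E : Matrix (Fin n) (Fin q) ℝ} {γ : ℝ} (P : Matrix (Fin n) (Fin n) ℝ) (hP : P.PosDef)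
    (hNeg : NegDef (Aᵀ * P + P * A + Cᵀ * C)) (htr : Matrix.trace (Eᵀ * P * E) < γ) :
    IsHurwitz A ∧ H2Cost A C E < γ := by
  set R := -(Aᵀ * P + P * A + Cᵀ * C) with hRdef
  have hR : R.PosDef := hNeg
  have hLyap : Aᵀ * P + P * A = -(Cᵀ * C + R) := by
    rw [hRdef]
    abel
  have hS : (Cᵀ * C + R).PosDef := by
    refine posDef_of ?_ fun x hx => ?_
    · rw [Matrix.transpose_add, Matrix.transpose_mul, Matrix.transpose_transpose]
      congr 1
      have := hR.1
      rwa [Matrix.IsHermitian, Matrix.conjTranspose_eq_transpose_of_trivial] at this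
    · rw [Matrix.add_mulVec, dotProduct_add]
      have h1 := qf_psd (ctct_psd C) x
      have h2 := qf_pd hR hx
      linarith
  have hHur : IsHurwitz A := hurwitz_of_lyap hP hS hLyap
  refine ⟨hHur, ?_⟩
  -- cost bound
  set g : ℝ → ℝ := fun t => trCLM E (Gm A (Cᵀ * C) t) with hgdef
  set r : ℝ → ℝ := fun t => trCLM E (Gm A R t) with hrdef
  set h : ℝ → ℝ := fun t => trCLM E (Gm A P t) with hhdef
  have hg0 : ∀ t, 0 ≤ g t := fun t => trace_nonneg (conj_psd (Gm_psd (ctct_psd C) A t) E)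
  have hr0 : ∀ t, 0 ≤ r t := fun t => trace_nonneg (conj_psd (Gm_psd hR.posSemidef A t) E)
  have hgc : Continuous g := (trCLM E).continuous.comp (Gm_continuous A (Cᵀ * C))
  have hrc : Continuous r := (trCLM E).continuous.comp (Gm_continuous A R)
  have hd : ∀ t : ℝ, HasDerivAt h (-(g t + r t)) t := by
    intro t
    have h1 := (trCLM E).hasFDerivAt.comp_hasDerivAt t (Gm_hasDerivAt A P t)
    have h2 : -(g t + r t) = trCLM E (Aᵀ * Gm A P t + Gm A P t * A) := by
      rw [Gm_lyap_eq, hLyap, Gm_neg, Gm_add, map_neg, map_add]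
    rw [h2]
    exact h1
  have hI : ∀ T : ℝ, 0 ≤ T → ∫ t in (0:ℝ)..T, g t ≤ (Eᵀ * P * E).trace := by
    intro T hT
    have hftc : ∫ t in (0:ℝ)..T, (-(g t + r t)) = h T - h 0 :=
      intervalIntegral.integral_eq_sub_of_hasDerivAt (fun t _ => hd t)
        (((hgc.add hrc).neg).intervalIntegrable _ _)
    have hsplit : ∫ t in (0:ℝ)..T, (-(g t + r t))
        = -(∫ t in (0:ℝ)..T, g t) - ∫ t in (0:ℝ)..T, r t := by
      rw [intervalIntegral.integral_neg, intervalIntegral.integral_add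
        (hgc.intervalIntegrable _ _) (hrc.intervalIntegrable _ _)]
      ring
    have hh0 : h 0 = (Eᵀ * P * E).trace := by
      rw [hhdef]
      simp [Gm_zero]
    have hhT : 0 ≤ h T := trace_nonneg (conj_psd (Gm_psd hP.posSemidef A T) E)
    have hrT : 0 ≤ ∫ t in (0:ℝ)..T, r t :=
      intervalIntegral.integral_nonneg hT fun t _ => hr0 t
    linarith [hftc.symm.trans hsplit]
  have hgint : IntegrableOn g (Ioi (0:ℝ)) := by
    refine integrableOn_Ioi_of_intervalIntegral_norm_bounded ((Eᵀ * P * E).trace) 0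
      (fun i : ℝ => (hgc.integrableOn_Ioc)) tendsto_id ?_
    filter_upwards [eventually_ge_atTop (0:ℝ)] with T hT
    have heq : ∫ t in (0:ℝ)..T, ‖g t‖ = ∫ t in (0:ℝ)..T, g t :=
      intervalIntegral.integral_congr fun t _ => Real.norm_of_nonneg (hg0 t)
    simp only [id_eq]
    rw [heq]
    exact hI T hT
  have hval : ∫ t in Ioi (0:ℝ), g t ≤ (Eᵀ * P * E).trace := by
    refine le_of_tendsto (intervalIntegral_tendsto_integral_Ioi 0 hgint tendsto_id) ?_
    filter_upwards [eventually_ge_atTop (0:ℝ)] with T hT using hI T hT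
  have hH2 : H2Cost A C E = ∫ t in Ioi (0:ℝ), g t := by
    unfold H2Cost
    exact integral_congr_ae (Eventually.of_forall fun t => integrand_eq A C E t)
  rw [hH2]
  linarith

end H2Aux

/-- The system `ẋ = Ax + Ed, y = Cx` is internally stable and `J < γ` iff there exists `P > 0`
with `AᵀP + PA + CᵀC < 0` and `tr(EᵀPE) < γ`. -/
theorem stmt_5 {n p q : ℕ} (A : Matrix (Fin n) (Fin n) ℝ) (C : Matrix (Fin p) (Fin n) ℝ)
    (E : Matrix (Fin n) (Fin q) ℝ) (γ : ℝ) (hγ : 0 < γ) :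
    (IsHurwitz A ∧ H2Cost A C E < γ) ↔
      ∃ P : Matrix (Fin n) (Fin n) ℝ, P.PosDef ∧
        NegDef (Aᵀ * P + P * A + Cᵀ * C) ∧ Matrix.trace (Eᵀ * P * E) < γ := by
  constructor
  · rintro ⟨hA, hJ⟩
    exact H2Aux.forward hA hJ
  · rintro ⟨P, hP, hNeg, htr⟩
    exact H2Aux.backward P hP hNeg htr
end

section
/- Let ℒ = ΘL + LᵀΘ be the positive semi-definite matrix associated with a strongly connected weighted directed graph with N nodes, with ker ℒ = span{𝟏_N}. Let T = blockdiag(T₁,...,T_N) with each T_i ∈ ℝ^{n×n} orthogonal, and for each i let M_i = diag(m_i I_{v_i}, 0_{n−v_i}) with m_i > 0 and 1 ≤ v_i ≤ n, M = blockdiag(M₁,...,M_N). Assume for every nonzero x ∈ ℝ^n, there is some i such that the first v_i entries of T_iᵀx are not all zero (i.e., ⋂_i im(T_i[:, v_i+1:]) = {0}). Then Tᵀ(ℒ ⊗ I_n)T + M > 0. -/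
/-!
Both summands are positive semidefinite, so it suffices that their kernels meet only in `0`.
If `Tᵀ(ℒ ⊗ I)T x = 0`, every column of `T x` lies in `ker ℒ = span 𝟏`, so `T_i x_i = z` for a
single `z` and all `i`, i.e. `x_i = T_iᵀ z`. If also `M x = 0`, the first `v_i` entries of each
`T_iᵀ z` vanish, and joint detectability forces `z = 0`, hence `x = 0`.
-/

open Matrix Kronecker

/-- Block diagonal matrix built from `N` blocks of size `n × n`. -/
def blockDiag {N n : ℕ} (f : Fin N → Matrix (Fin n) (Fin n) ℝ) :
    Matrix (Fin N × Fin n) (Fin N × Fin n) ℝ :=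
  fun p q => if p.1 = q.1 then f p.1 p.2 q.2 else 0

namespace Matrix

variable {l m n κ : Type*} [Fintype m] [Fintype n]

theorem kronecker_one_mulVec_apply {R : Type*} [NonAssocSemiring R] [Fintype κ] [DecidableEq κ]
    (A : Matrix l m R) (y : m × κ → R) (i : l) (a : κ) :
    ((A ⊗ₖ (1 : Matrix κ κ R)) *ᵥ y) (i, a) = (A *ᵥ fun j => y (j, a)) i := by
  simp only [mulVec, dotProduct, ← Finset.univ_product_univ, Finset.sum_product,
    kroneckerMap_apply, one_apply, mul_ite, mul_one, mul_zero, ite_mul, zero_mul,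
    Finset.sum_ite_eq, Finset.mem_univ, if_true]

open scoped ComplexOrder

variable {𝕜 : Type*} [RCLike 𝕜]

theorem PosSemidef.mulVec_mulVec_eq_zero_of_conjTranspose_mul_mul {A : Matrix m m 𝕜}
    (hA : A.PosSemidef) {B : Matrix m n 𝕜} {x : n → 𝕜} (h : (Bᴴ * A * B) *ᵥ x = 0) :
    A *ᵥ (B *ᵥ x) = 0 := by
  rw [← hA.dotProduct_mulVec_zero_iff, star_mulVec, ← dotProduct_mulVec, mulVec_mulVec,
    mulVec_mulVec, h, dotProduct_zero]

theorem PosSemidef.posDef_add {A B : Matrix n n 𝕜} (hA : A.PosSemidef) (hB : B.PosSemidef)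
    (h : ∀ x, A *ᵥ x = 0 → B *ᵥ x = 0 → x = 0) : (A + B).PosDef := by
  refine .of_dotProduct_mulVec_pos (hA.1.add hB.1) fun x hx => ?_
  refine lt_of_le_of_ne ((hA.add hB).dotProduct_mulVec_nonneg x) fun h0 => hx ?_
  rw [add_mulVec, dotProduct_add, eq_comm,
    add_eq_zero_iff_of_nonneg (hA.dotProduct_mulVec_nonneg x) (hB.dotProduct_mulVec_nonneg x),
    hA.dotProduct_mulVec_zero_iff, hB.dotProduct_mulVec_zero_iff] at h0
  exact h x h0.1 h0.2

end Matrix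

theorem blockDiag_mulVec {N n : ℕ} (f : Fin N → Matrix (Fin n) (Fin n) ℝ)
    (x : Fin N × Fin n → ℝ) (i : Fin N) (a : Fin n) :
    (blockDiag f *ᵥ x) (i, a) = (f i *ᵥ fun b => x (i, b)) a := by
  simp only [mulVec, dotProduct, _root_.blockDiag, ← Finset.univ_product_univ, Finset.sum_product,
    ite_mul, zero_mul]
  rw [Finset.sum_comm]
  simp

theorem blockDiag_diagonal {N n : ℕ} (d : Fin N → Fin n → ℝ) :
    blockDiag (fun i => diagonal (d i)) = diagonal fun p => d p.1 p.2 := by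
  ext ⟨i, a⟩ ⟨j, b⟩
  by_cases hij : i = j
  · subst hij
    simp [_root_.blockDiag, diagonal_apply]
  · simp [_root_.blockDiag, hij]

theorem stmt_8_general {N n : ℕ} (ℒ : Matrix (Fin N) (Fin N) ℝ) (hℒ : ℒ.PosSemidef)
    (hker : ∀ x : Fin N → ℝ, ℒ.mulVec x = 0 ↔ ∃ c : ℝ, x = fun _ => c)
    (T : Fin N → Matrix (Fin n) (Fin n) ℝ) (hT : ∀ i, (T i)ᵀ * T i = 1)
    (v : Fin N → ℕ)
    (m : Fin N → ℝ) (hm : ∀ i, 0 < m i)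
    (hjoint : ∀ x : Fin n → ℝ, x ≠ 0 →
      ∃ i, ∃ a : Fin n, (a : ℕ) < v i ∧ ((T i)ᵀ).mulVec x a ≠ 0) :
    ((blockDiag T)ᵀ * (ℒ ⊗ₖ (1 : Matrix (Fin n) (Fin n) ℝ)) * blockDiag T +
      blockDiag (fun i => Matrix.diagonal (fun j : Fin n => if (j : ℕ) < v i then m i else 0))).PosDef := by
  have hL : (ℒ ⊗ₖ (1 : Matrix (Fin n) (Fin n) ℝ)).PosSemidef := hℒ.kronecker .one
  rw [blockDiag_diagonal, ← conjTranspose_eq_transpose_of_trivial]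
  refine PosSemidef.posDef_add (hL.conjTranspose_mul_mul_same (blockDiag T))
    (.diagonal fun p => by dsimp only; split_ifs <;> simp [(hm _).le]) fun x hLx hMx => ?_
  have hcol : ∀ a, ∃ c : ℝ, (fun i => (blockDiag T *ᵥ x) (i, a)) = fun _ => c := fun a =>
    (hker _).1 <| funext fun i => by
      simpa [kronecker_one_mulVec_apply] using
        congrFun (hL.mulVec_mulVec_eq_zero_of_conjTranspose_mul_mul hLx) (i, a)
  choose z hz using hcol
  have hxT : ∀ i, (fun b => x (i, b)) = (T i)ᵀ *ᵥ z := fun i => by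
    have hTx : T i *ᵥ (fun b => x (i, b)) = z :=
      funext fun a => (blockDiag_mulVec T x i a).symm.trans (congrFun (hz a) i)
    rw [← hTx, mulVec_mulVec, hT, one_mulVec]
  have hxv : ∀ i (a : Fin n), (a : ℕ) < v i → x (i, a) = 0 := fun i a ha => by
    simpa [mulVec_diagonal, ha, (hm i).ne'] using congrFun hMx (i, a)
  have hz0 : z = 0 := by
    by_contra hz0
    obtain ⟨i, a, ha, hne⟩ := hjoint z hz0
    exact hne (by rw [← hxT]; exact hxv i a ha)
  ext ⟨i, a⟩
  simpa [hz0] using congrFun (hxT i) a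

/-- If `ℒ ⪰ 0` with `ker ℒ = span{𝟏}`, the `T_i` are orthogonal,
`M_i = diag(m_i I_{v_i}, 0)` with `m_i > 0`, and the joint detectability condition
`⋂_i im(T_{i2}) = {0}` holds, then `Tᵀ(ℒ ⊗ I_n)T + M > 0`. -/
theorem stmt_8 {N n : ℕ} (ℒ : Matrix (Fin N) (Fin N) ℝ) (hℒ : ℒ.PosSemidef)
    (hker : ∀ x : Fin N → ℝ, ℒ.mulVec x = 0 ↔ ∃ c : ℝ, x = fun _ => c)
    (T : Fin N → Matrix (Fin n) (Fin n) ℝ) (hT : ∀ i, (T i)ᵀ * T i = 1)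
    (v : Fin N → ℕ) (hv1 : ∀ i, 1 ≤ v i) (hvn : ∀ i, v i ≤ n)
    (m : Fin N → ℝ) (hm : ∀ i, 0 < m i)
    (hjoint : ∀ x : Fin n → ℝ, x ≠ 0 →
      ∃ i, ∃ a : Fin n, (a : ℕ) < v i ∧ ((T i)ᵀ).mulVec x a ≠ 0) :
    ((blockDiag T)ᵀ * (ℒ ⊗ₖ (1 : Matrix (Fin n) (Fin n) ℝ)) * blockDiag T +
      blockDiag (fun i => Matrix.diagonal (fun j : Fin n => if (j : ℕ) < v i then m i else 0))).PosDef :=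
  stmt_8_general ℒ hℒ hker T hT v m hm hjoint
end

section
/- Suppose for i = 1,...,N there exist κ > 0, P_{i1} > 0, P_{i2} > 0 satisfying the LMIs (ineq_perform1) [[Φ_i + H_{i1}ᵀH_{i1} + κ(m_i−ε)I, A_{i21}ᵀP_{i2} + H_{i1}ᵀH_{i2}],[P_{i2}A_{i21} + H_{i2}ᵀH_{i1}, P_{i2}A_{i22} + A_{i22}ᵀP_{i2} + H_{i2}ᵀH_{i2} − κεI]] < 0 where Φ_i = (A_{i11} − G_{i1}C_{i1})ᵀP_{i1} + P_{i1}(A_{i11} − G_{i1}C_{i1}), and ε > 0 satisfies Tᵀ(ℒ ⊗ I_n)T + M > εI. Then the block-diagonal matrix P = blockdiag(T_i diag(P_{i1}, P_{i2}) T_iᵀ) > 0 satisfies ĀᵀP + PĀ − (Lᵀ⊗I_n)F̄ᵀP − PF̄(L⊗I_n) + I_N ⊗ HᵀH < 0, where Ā = blockdiag(A − G_iC_i), F_i = κθ_i T_i diag(P_{i1}^{−1}, P_{i2}^{−1}) T_iᵀ, G_i = T_i (G_{i1}ᵀ 0)ᵀ, F̄ = blockdiag(F_i). -/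
open Matrix Kronecker

/-- The index equivalence `Fin n ≃ Fin v ⊕ Fin (n - v)` splitting the first `v` coordinates. -/
def decompEquiv (v n : ℕ) (h : v ≤ n) : Fin n ≃ Fin v ⊕ Fin (n - v) :=
  (finCongr (Nat.add_sub_cancel' h).symm).trans finSumFinEquiv.symm

/-! Write `P_i = T_i diag(P_{i1}, P_{i2}) T_iᵀ`. Since `P_i F_i = κ θ_i I` and `P` is symmetric,
the coupling terms `(Lᵀ ⊗ I) F̄ᵀ P + P F̄ (L ⊗ I)` collapse to `κ (ℒ ⊗ I)`. In the coordinates of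
`T_i` the local term `Āᵢᵀ Pᵢ + Pᵢ Āᵢ + HᵀH` is the block matrix of the LMI (ineq_perform1) with the
shifts `κ (m_i - ε) I` and `-κ ε I` removed. Hence the negated left-hand side is the sum of
`κ T (Tᵀ (ℒ ⊗ I) T + M - ε I) Tᵀ` and the block diagonal of the `T_i`-conjugates of the negated
LMIs, both positive definite. -/

section BlockDiag

variable {N n : ℕ} (f g : Fin N → Matrix (Fin n) (Fin n) ℝ)

theorem blockDiag_eq_submatrix_blockDiagonal :
    blockDiag f = (blockDiagonal f).submatrix Prod.swap Prod.swap :=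
  rfl

theorem blockDiag_mul_blockDiag : blockDiag f * blockDiag g = blockDiag fun i => f i * g i := by
  simp only [blockDiag_eq_submatrix_blockDiagonal]
  rw [show (Prod.swap : Fin N × Fin n → _) = Equiv.prodComm _ _ from rfl, submatrix_mul_equiv,
    blockDiagonal_mul]

theorem transpose_blockDiag : (blockDiag f)ᵀ = blockDiag fun i => (f i)ᵀ := by
  simp only [blockDiag_eq_submatrix_blockDiagonal, transpose_submatrix, blockDiagonal_transpose]

theorem blockDiag_add_blockDiag : blockDiag f + blockDiag g = blockDiag fun i => f i + g i :=
  congrArg (submatrix · Prod.swap Prod.swap) (blockDiagonal_add f g).symm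

theorem blockDiag_sub_blockDiag : blockDiag f - blockDiag g = blockDiag fun i => f i - g i :=
  congrArg (submatrix · Prod.swap Prod.swap) (blockDiagonal_sub f g).symm

theorem smul_blockDiag (c : ℝ) : c • blockDiag f = blockDiag fun i => c • f i :=
  congrArg (submatrix · Prod.swap Prod.swap) (blockDiagonal_smul c f).symm

theorem blockDiag_const_one : blockDiag (fun _ => 1 : Fin N → Matrix (Fin n) (Fin n) ℝ) = 1 := by
  rw [blockDiag_eq_submatrix_blockDiagonal, ← Pi.one_def, blockDiagonal_one]
  exact submatrix_one_equiv (Equiv.prodComm _ _)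

theorem blockDiag_smul_one (c : Fin N → ℝ) :
    blockDiag (fun i => c i • (1 : Matrix (Fin n) (Fin n) ℝ)) = diagonal c ⊗ₖ 1 := by
  ext ⟨i, a⟩ ⟨j, b⟩
  by_cases h : i = j <;> simp [_root_.blockDiag, h]

end BlockDiag

section PosDef

variable {m n o : Type*} [Fintype m] [Fintype n] [Fintype o]

theorem posDef_blockDiagonal [DecidableEq o] {f : o → Matrix m m ℝ} (hf : ∀ k, (f k).PosDef) :
    (blockDiagonal f).PosDef := by
  refine .of_dotProduct_mulVec_pos ?_ fun x hx => ?_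
  · rw [IsHermitian, blockDiagonal_conjTranspose]
    exact congrArg _ (funext fun k => (hf k).isHermitian)
  · obtain ⟨k, hk⟩ : ∃ k, (fun i => x (i, k)) ≠ 0 := by
      by_contra! h
      exact hx (funext fun ik => congrFun (h ik.2) ik.1)
    have hsum : star x ⬝ᵥ blockDiagonal f *ᵥ x =
        ∑ k, star (fun i => x (i, k)) ⬝ᵥ f k *ᵥ fun i => x (i, k) := by
      simp only [dotProduct, Pi.star_apply, star_trivial, mulVec, blockDiagonal_apply, ite_mul,
        zero_mul, Fintype.sum_prod_type, Finset.sum_ite_eq, Finset.mem_univ, if_true,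
        Finset.mul_sum]
      exact Finset.sum_comm
    rw [hsum]
    exact Finset.sum_pos' (fun k _ => (hf k).posSemidef.dotProduct_mulVec_nonneg _)
      ⟨k, Finset.mem_univ _, (hf k).dotProduct_mulVec_pos hk⟩

theorem posDef_blockDiag {N n : ℕ} {f : Fin N → Matrix (Fin n) (Fin n) ℝ}
    (hf : ∀ i, (f i).PosDef) : (blockDiag f).PosDef :=
  (posDef_blockDiagonal hf).submatrix Prod.swap_injective

theorem posDef_fromBlocks_zero [DecidableEq m] [DecidableEq n] {A : Matrix m m ℝ}
    {D : Matrix n n ℝ} (hA : A.PosDef) (hD : D.PosDef) : (fromBlocks A 0 0 D).PosDef := by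
  have := hA.isUnit.invertible
  have hpsd : (fromBlocks A 0 0 D).PosSemidef := by
    simpa using (hA.fromBlocks₁₁ 0 D).2 (by simpa using hD.posSemidef)
  rw [hpsd.posDef_iff_isUnit, isUnit_iff_isUnit_det, det_fromBlocks_zero₂₁]
  exact (isUnit_iff_isUnit_det _ |>.1 hA.isUnit).mul (isUnit_iff_isUnit_det _ |>.1 hD.isUnit)

theorem Matrix.PosDef.mul_mul_transpose_of_mul_transpose_eq_one [DecidableEq m]
    {X : Matrix n n ℝ} (hX : X.PosDef) {U : Matrix m n ℝ} (hU : U * Uᵀ = 1) :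
    (U * X * Uᵀ).PosDef := by
  rw [← conjTranspose_eq_transpose_of_trivial]
  refine hX.mul_mul_conjTranspose_same (Function.LeftInverse.injective (g := (· ᵥ* Uᵀ)) ?_)
  intro x
  simp [vecMul_vecMul, hU]

end PosDef

theorem posDef_mul_reindex_mul_transpose {n s : Type*} [Fintype n] [Fintype s] [DecidableEq n]
    {T : Matrix n n ℝ} (hT : Tᵀ * T = 1) (e : n ≃ s) {X : Matrix s s ℝ} (hX : X.PosDef) :
    (T * reindex e.symm e.symm X * Tᵀ).PosDef :=
  (hX.submatrix e.injective).mul_mul_transpose_of_mul_transpose_eq_one (mul_eq_one_comm.mp hT)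

theorem closedLoop_lyapunov_eq_conj {n s r p : Type*} [Fintype n] [Fintype s] [Fintype r]
    [Fintype p] [DecidableEq n] [DecidableEq s] {U : Matrix n s ℝ} (hU : Uᵀ * U = 1)
    (hU' : U * Uᵀ = 1)
    (A : Matrix n n ℝ) (G : Matrix s r ℝ) (C : Matrix r n ℝ) (H : Matrix p n ℝ)
    (P : Matrix s s ℝ) :
    (A - U * G * C)ᵀ * (U * P * Uᵀ) + U * P * Uᵀ * (A - U * G * C) + Hᵀ * H =
      U * ((Uᵀ * A * U - G * (C * U))ᵀ * P + P * (Uᵀ * A * U - G * (C * U)) +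
        (H * U)ᵀ * (H * U)) * Uᵀ := by
  have hcancel (X : Matrix s n ℝ) : Uᵀ * (U * X) = X := by
    rw [← Matrix.mul_assoc, hU, Matrix.one_mul]
  have hA : A - U * G * C = U * (Uᵀ * A * U - G * (C * U)) * Uᵀ := by
    simp only [Matrix.mul_sub, Matrix.sub_mul, Matrix.mul_assoc, hU', Matrix.mul_one]
    simp only [← Matrix.mul_assoc, hU', Matrix.one_mul]
  have hH : Hᵀ * H = U * ((H * U)ᵀ * (H * U)) * Uᵀ := by
    simp only [transpose_mul, Matrix.mul_assoc, hU', Matrix.mul_one]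
    simp only [← Matrix.mul_assoc, hU', Matrix.one_mul]
  rw [hA, hH]
  simp only [transpose_mul, transpose_transpose, Matrix.mul_add, Matrix.add_mul, Matrix.mul_assoc,
    hcancel]

theorem closedLoop_lyapunov_fromBlocks {v w r p : Type*} [Fintype v] [Fintype w] [Fintype r]
    [Fintype p]
    (A11 : Matrix v v ℝ) (A21 : Matrix w v ℝ) (A22 : Matrix w w ℝ) (G1 : Matrix v r ℝ)
    (C1 : Matrix r v ℝ) (H1 : Matrix p v ℝ) (H2 : Matrix p w ℝ) (P1 : Matrix v v ℝ)
    (P2 : Matrix w w ℝ) :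
    (fromBlocks A11 0 A21 A22 - fromRows G1 0 * fromCols C1 0)ᵀ * fromBlocks P1 0 0 P2 +
        fromBlocks P1 0 0 P2 * (fromBlocks A11 0 A21 A22 - fromRows G1 0 * fromCols C1 0) +
        (fromCols H1 H2)ᵀ * fromCols H1 H2 =
      fromBlocks ((A11 - G1 * C1)ᵀ * P1 + P1 * (A11 - G1 * C1) + H1ᵀ * H1)
        (A21ᵀ * P2 + H1ᵀ * H2) (P2 * A21 + H2ᵀ * H1) (P2 * A22 + A22ᵀ * P2 + H2ᵀ * H2) := by
  simp only [fromRows_mul_fromCols, transpose_fromCols, sub_eq_add_neg, fromBlocks_neg,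
    fromBlocks_add, fromBlocks_transpose, fromBlocks_multiply, Matrix.mul_zero, Matrix.zero_mul,
    neg_zero, transpose_zero, add_zero, zero_add]
  rw [add_comm (A22ᵀ * P2)]

theorem sum_elim_decompEquiv {α : Type*} {v n : ℕ} (h : v ≤ n) (a b : α) (j : Fin n) :
    Sum.elim (fun _ => a) (fun _ => b) (decompEquiv v n h j) = if (j : ℕ) < v then a else b := by
  obtain ⟨k | k, rfl⟩ := (decompEquiv v n h).symm.surjective j <;> simp [decompEquiv]

theorem diagonal_ite_lt_eq_reindex {v n : ℕ} (h : v ≤ n) (c : ℝ) :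
    diagonal (fun j : Fin n => if (j : ℕ) < v then c else 0) =
      reindex (decompEquiv v n h).symm (decompEquiv v n h).symm (fromBlocks (c • 1) 0 0 0) := by
  rw [smul_one_eq_diagonal, ← diagonal_zero, fromBlocks_diagonal, reindex_apply, Equiv.symm_symm,
    submatrix_diagonal_equiv]
  exact congrArg diagonal (funext fun j => (sum_elim_decompEquiv h c 0 j).symm)

theorem fromBlocks_mul_fromBlocks_inv {m n : Type*} [Fintype m] [Fintype n] [DecidableEq m]
    [DecidableEq n] {A : Matrix m m ℝ} {D : Matrix n n ℝ} (hA : IsUnit A.det) (hD : IsUnit D.det) :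
    fromBlocks A 0 0 D * fromBlocks A⁻¹ 0 0 D⁻¹ = 1 := by
  rw [fromBlocks_multiply, mul_nonsing_inv A hA, mul_nonsing_inv D hD]
  simp

theorem conj_reindex_mul_conj_reindex_eq_one {n s : Type*} [Fintype n] [Fintype s]
    [DecidableEq n] [DecidableEq s] {T : Matrix n n ℝ} (hT : Tᵀ * T = 1) (e : n ≃ s)
    {D D' : Matrix s s ℝ} (hD : D * D' = 1) :
    T * reindex e.symm e.symm D * Tᵀ * (T * reindex e.symm e.symm D' * Tᵀ) = 1 := by
  calc T * reindex e.symm e.symm D * Tᵀ * (T * reindex e.symm e.symm D' * Tᵀ)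
      = T * (reindex e.symm e.symm D * (Tᵀ * T) * reindex e.symm e.symm D') * Tᵀ := by
        simp only [Matrix.mul_assoc]
    _ = T * Tᵀ := by
        rw [hT, Matrix.mul_one, reindex_apply, reindex_apply, submatrix_mul_equiv, hD,
          submatrix_one_equiv, Matrix.mul_one]
    _ = 1 := mul_eq_one_comm.mp hT

theorem posDef_local_of_negDef_lmi {n s₁ s₂ r p : Type*} [Fintype n] [Fintype s₁] [Fintype s₂]
    [Fintype r] [Fintype p] [DecidableEq n] [DecidableEq s₁] [DecidableEq s₂]
    {T : Matrix n n ℝ} (hT : Tᵀ * T = 1) (e : n ≃ s₁ ⊕ s₂) {A : Matrix n n ℝ}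
    {C : Matrix r n ℝ} {H : Matrix p n ℝ} {A11 : Matrix s₁ s₁ ℝ} {A21 : Matrix s₂ s₁ ℝ}
    {A22 : Matrix s₂ s₂ ℝ} {C1 : Matrix r s₁ ℝ} {H1 : Matrix p s₁ ℝ} {H2 : Matrix p s₂ ℝ}
    (hA : Tᵀ * A * T = reindex e.symm e.symm (fromBlocks A11 0 A21 A22))
    (hC : C * T = reindex (Equiv.refl r) e.symm (fromCols C1 0))
    (hH : H * T = reindex (Equiv.refl p) e.symm (fromCols H1 H2))
    (G1 : Matrix s₁ r ℝ) (P1 : Matrix s₁ s₁ ℝ) (P2 : Matrix s₂ s₂ ℝ) {μ ε κ : ℝ}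
    (hLMI : NegDef (fromBlocks
      ((A11 - G1 * C1)ᵀ * P1 + P1 * (A11 - G1 * C1) + H1ᵀ * H1 + (κ * (μ - ε)) • 1)
      (A21ᵀ * P2 + H1ᵀ * H2) (P2 * A21 + H2ᵀ * H1)
      (P2 * A22 + A22ᵀ * P2 + H2ᵀ * H2 - (κ * ε) • 1))) :
    ((κ * ε) • 1 - κ • (T * reindex e.symm e.symm (fromBlocks (μ • 1) 0 0 0) * Tᵀ) -
      ((A - T * reindex e.symm (Equiv.refl r) (fromRows G1 0) * C)ᵀ *
          (T * reindex e.symm e.symm (fromBlocks P1 0 0 P2) * Tᵀ) +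
        T * reindex e.symm e.symm (fromBlocks P1 0 0 P2) * Tᵀ *
          (A - T * reindex e.symm (Equiv.refl r) (fromRows G1 0) * C) +
        Hᵀ * H)).PosDef := by
  obtain ⟨U, rfl⟩ : ∃ U : Matrix n (s₁ ⊕ s₂) ℝ, T = U.submatrix id e :=
    ⟨T.submatrix id e.symm, by simp⟩
  -- `(U.submatrix id e)ᵀ * X * U.submatrix id e` is definitionally a reindexing of `Uᵀ * X * U`
  have hU : Uᵀ * U = 1 := (reindex e.symm e.symm).injective (a₁ := Uᵀ * U) (a₂ := 1)
    (hT.trans (submatrix_one_equiv e).symm)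
  have hU' : U * Uᵀ = 1 := by
    simpa [transpose_submatrix] using mul_eq_one_comm.mp hT
  have hA' : Uᵀ * A * U = fromBlocks A11 0 A21 A22 :=
    (reindex e.symm e.symm).injective (a₁ := Uᵀ * A * U) hA
  have hC' : C * U = fromCols C1 0 := (reindex (Equiv.refl r) e.symm).injective (a₁ := C * U) hC
  have hH' : H * U = fromCols H1 H2 := (reindex (Equiv.refl p) e.symm).injective (a₁ := H * U) hH
  have hblocks : fromBlocks
      ((A11 - G1 * C1)ᵀ * P1 + P1 * (A11 - G1 * C1) + H1ᵀ * H1 + (κ * (μ - ε)) • 1)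
      (A21ᵀ * P2 + H1ᵀ * H2) (P2 * A21 + H2ᵀ * H1)
      (P2 * A22 + A22ᵀ * P2 + H2ᵀ * H2 - (κ * ε) • 1) =
      (Uᵀ * A * U - fromRows G1 0 * (C * U))ᵀ * fromBlocks P1 0 0 P2 +
        fromBlocks P1 0 0 P2 * (Uᵀ * A * U - fromRows G1 0 * (C * U)) + (H * U)ᵀ * (H * U) +
        κ • fromBlocks (μ • 1) 0 0 0 - (κ * ε) • 1 := by
    rw [hA', hC', hH', closedLoop_lyapunov_fromBlocks, ← fromBlocks_one]
    simp only [fromBlocks_smul, sub_eq_add_neg, fromBlocks_neg, fromBlocks_add, smul_zero,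
      neg_zero, add_zero]
    congr 1
    module
  convert PosDef.mul_mul_transpose_of_mul_transpose_eq_one hLMI hU' using 1
  simp only [reindex_apply, Equiv.symm_symm, Equiv.refl_symm, Equiv.coe_refl, transpose_submatrix,
    submatrix_mul_equiv, submatrix_id_id]
  rw [closedLoop_lyapunov_eq_conj hU hU', hblocks]
  simp only [Matrix.mul_neg, Matrix.neg_mul, Matrix.mul_add, Matrix.add_mul, Matrix.mul_sub,
    Matrix.sub_mul, Matrix.mul_smul, Matrix.smul_mul, Matrix.mul_one, hU']
  abel

theorem negDef_of_lyapunov_coupling {ι n : Type*} [Fintype ι] [Fintype n] [DecidableEq ι]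
    [DecidableEq n] (L : Matrix ι ι ℝ) (θ : ι → ℝ) {κ ε : ℝ} (hκ : 0 < κ)
    {A P F Hb B M : Matrix (ι × n) (ι × n) ℝ} (hP : P.IsHermitian)
    (hPF : P * F = diagonal (fun i => κ * θ i) ⊗ₖ 1) (hB : B * Bᵀ = 1)
    (hε : (Bᵀ * ((diagonal θ * L + Lᵀ * diagonal θ) ⊗ₖ 1) * B + M - ε • 1).PosDef)
    (hloc : ((κ * ε) • 1 - κ • (B * M * Bᵀ) - (Aᵀ * P + P * A + Hb)).PosDef) :
    NegDef (Aᵀ * P + P * A - (Lᵀ ⊗ₖ 1) * Fᵀ * P - P * F * (L ⊗ₖ 1) + Hb) := by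
  have hΘ : diagonal (fun i => κ * θ i) = κ • diagonal θ := by
    rw [← diagonal_smul]; rfl
  have hFP : Fᵀ * P = diagonal (fun i => κ * θ i) ⊗ₖ (1 : Matrix n n ℝ) := by
    have hPt : Pᵀ = P := (conjTranspose_eq_transpose_of_trivial P).symm.trans hP
    rw [← hPt, ← transpose_mul, hPF, ← kroneckerMap_transpose, diagonal_transpose,
      transpose_one]
  have hcoupling : (Lᵀ ⊗ₖ 1) * Fᵀ * P + P * F * (L ⊗ₖ 1) =
      κ • ((diagonal θ * L + Lᵀ * diagonal θ) ⊗ₖ (1 : Matrix n n ℝ)) := by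
    rw [Matrix.mul_assoc, hFP, hPF, ← mul_kronecker_mul, ← mul_kronecker_mul, hΘ]
    simp only [Matrix.mul_one, Matrix.mul_smul, Matrix.smul_mul, smul_kronecker, ← smul_add,
      ← add_kronecker, add_comm]
  have hconj : B * (Bᵀ * ((diagonal θ * L + Lᵀ * diagonal θ) ⊗ₖ 1) * B + M - ε • 1) * Bᵀ =
      (diagonal θ * L + Lᵀ * diagonal θ) ⊗ₖ 1 + B * M * Bᵀ - ε • 1 := by
    simp only [Matrix.mul_add, Matrix.add_mul, Matrix.mul_sub, Matrix.sub_mul, Matrix.mul_smul,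
      Matrix.smul_mul, Matrix.mul_one, ← Matrix.mul_assoc, hB, Matrix.one_mul]
    rw [Matrix.mul_assoc _ B, hB, Matrix.mul_one]
  have hsplit : -(Aᵀ * P + P * A - (Lᵀ ⊗ₖ 1) * Fᵀ * P - P * F * (L ⊗ₖ 1) + Hb) =
      κ • (B * (Bᵀ * ((diagonal θ * L + Lᵀ * diagonal θ) ⊗ₖ 1) * B + M - ε • 1) * Bᵀ) +
        ((κ * ε) • 1 - κ • (B * M * Bᵀ) - (Aᵀ * P + P * A + Hb)) := by
    rw [hconj, sub_sub (Aᵀ * P + P * A), hcoupling]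
    module
  unfold NegDef
  rw [hsplit]
  exact ((hε.mul_mul_transpose_of_mul_transpose_eq_one hB).smul hκ).add hloc

theorem stmt_19_general {N n p : ℕ} (r : Fin N → ℕ)
    (L : Matrix (Fin N) (Fin N) ℝ)
    (θ : Fin N → ℝ)
    (A : Matrix (Fin n) (Fin n) ℝ) (H : Matrix (Fin p) (Fin n) ℝ)
    (C : ∀ i : Fin N, Matrix (Fin (r i)) (Fin n) ℝ)
    (T : Fin N → Matrix (Fin n) (Fin n) ℝ) (hT : ∀ i, (T i)ᵀ * T i = 1)
    (v : Fin N → ℕ) (hv : ∀ i, v i ≤ n)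
    (A11 : ∀ i : Fin N, Matrix (Fin (v i)) (Fin (v i)) ℝ)
    (A21 : ∀ i : Fin N, Matrix (Fin (n - v i)) (Fin (v i)) ℝ)
    (A22 : ∀ i : Fin N, Matrix (Fin (n - v i)) (Fin (n - v i)) ℝ)
    (C1 : ∀ i : Fin N, Matrix (Fin (r i)) (Fin (v i)) ℝ)
    (H1 : ∀ i : Fin N, Matrix (Fin p) (Fin (v i)) ℝ)
    (H2 : ∀ i : Fin N, Matrix (Fin p) (Fin (n - v i)) ℝ)
    (hA : ∀ i, (T i)ᵀ * A * T i =
      Matrix.reindex (decompEquiv (v i) n (hv i)).symm (decompEquiv (v i) n (hv i)).symm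
        (Matrix.fromBlocks (A11 i) 0 (A21 i) (A22 i)))
    (hC : ∀ i, C i * T i =
      Matrix.reindex (Equiv.refl (Fin (r i))) (decompEquiv (v i) n (hv i)).symm
        (Matrix.fromCols (C1 i) 0))
    (hH : ∀ i, H * T i =
      Matrix.reindex (Equiv.refl (Fin p)) (decompEquiv (v i) n (hv i)).symm
        (Matrix.fromCols (H1 i) (H2 i)))
    (m : Fin N → ℝ) (ε : ℝ)
    (hεbound : ((blockDiag T)ᵀ *
        ((Matrix.diagonal θ * L + Lᵀ * Matrix.diagonal θ) ⊗ₖ (1 : Matrix (Fin n) (Fin n) ℝ)) *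
        blockDiag T +
      blockDiag (fun i => Matrix.diagonal (fun j : Fin n => if (j : ℕ) < v i then m i else 0)) -
      ε • (1 : Matrix (Fin N × Fin n) (Fin N × Fin n) ℝ)).PosDef)
    (G1 : ∀ i : Fin N, Matrix (Fin (v i)) (Fin (r i)) ℝ)
    (κ : ℝ) (hκ : 0 < κ)
    (P1 : ∀ i : Fin N, Matrix (Fin (v i)) (Fin (v i)) ℝ) (hP1 : ∀ i, (P1 i).PosDef)
    (P2 : ∀ i : Fin N, Matrix (Fin (n - v i)) (Fin (n - v i)) ℝ) (hP2 : ∀ i, (P2 i).PosDef)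
    (hLMI : ∀ i, NegDef (Matrix.fromBlocks
      ((A11 i - G1 i * C1 i)ᵀ * P1 i + P1 i * (A11 i - G1 i * C1 i) + (H1 i)ᵀ * H1 i +
        (κ * (m i - ε)) • (1 : Matrix (Fin (v i)) (Fin (v i)) ℝ))
      ((A21 i)ᵀ * P2 i + (H1 i)ᵀ * H2 i)
      (P2 i * A21 i + (H2 i)ᵀ * H1 i)
      (P2 i * A22 i + (A22 i)ᵀ * P2 i + (H2 i)ᵀ * H2 i -
        (κ * ε) • (1 : Matrix (Fin (n - v i)) (Fin (n - v i)) ℝ)))) :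
    (blockDiag (fun i => T i *
        Matrix.reindex (decompEquiv (v i) n (hv i)).symm (decompEquiv (v i) n (hv i)).symm
          (Matrix.fromBlocks (P1 i) 0 0 (P2 i)) * (T i)ᵀ)).PosDef ∧
    NegDef (
      (blockDiag (fun i => A - (T i *
          Matrix.reindex (decompEquiv (v i) n (hv i)).symm (Equiv.refl (Fin (r i)))
            (Matrix.fromRows (G1 i) 0)) * C i))ᵀ *
        blockDiag (fun i => T i *
          Matrix.reindex (decompEquiv (v i) n (hv i)).symm (decompEquiv (v i) n (hv i)).symm
            (Matrix.fromBlocks (P1 i) 0 0 (P2 i)) * (T i)ᵀ) +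
      blockDiag (fun i => T i *
          Matrix.reindex (decompEquiv (v i) n (hv i)).symm (decompEquiv (v i) n (hv i)).symm
            (Matrix.fromBlocks (P1 i) 0 0 (P2 i)) * (T i)ᵀ) *
        blockDiag (fun i => A - (T i *
          Matrix.reindex (decompEquiv (v i) n (hv i)).symm (Equiv.refl (Fin (r i)))
            (Matrix.fromRows (G1 i) 0)) * C i) -
      (Lᵀ ⊗ₖ (1 : Matrix (Fin n) (Fin n) ℝ)) *
        (blockDiag (fun i => (κ * θ i) • (T i *
          Matrix.reindex (decompEquiv (v i) n (hv i)).symm (decompEquiv (v i) n (hv i)).symm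
            (Matrix.fromBlocks (P1 i)⁻¹ 0 0 (P2 i)⁻¹) * (T i)ᵀ)))ᵀ *
        blockDiag (fun i => T i *
          Matrix.reindex (decompEquiv (v i) n (hv i)).symm (decompEquiv (v i) n (hv i)).symm
            (Matrix.fromBlocks (P1 i) 0 0 (P2 i)) * (T i)ᵀ) -
      blockDiag (fun i => T i *
          Matrix.reindex (decompEquiv (v i) n (hv i)).symm (decompEquiv (v i) n (hv i)).symm
            (Matrix.fromBlocks (P1 i) 0 0 (P2 i)) * (T i)ᵀ) *
        blockDiag (fun i => (κ * θ i) • (T i *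
          Matrix.reindex (decompEquiv (v i) n (hv i)).symm (decompEquiv (v i) n (hv i)).symm
            (Matrix.fromBlocks (P1 i)⁻¹ 0 0 (P2 i)⁻¹) * (T i)ᵀ)) *
        (L ⊗ₖ (1 : Matrix (Fin n) (Fin n) ℝ)) +
      blockDiag (fun _ => Hᵀ * H)) := by
  have hP := posDef_blockDiag fun i =>
    posDef_mul_reindex_mul_transpose (hT i) (decompEquiv (v i) n (hv i))
      (posDef_fromBlocks_zero (hP1 i) (hP2 i))
  refine ⟨hP, negDef_of_lyapunov_coupling L θ hκ hP.isHermitian ?coupling ?orthogonal hεbound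
    ?agents⟩
  case coupling =>
    rw [blockDiag_mul_blockDiag, ← blockDiag_smul_one]
    refine congrArg _root_.blockDiag (funext fun i => ?_)
    rw [Matrix.mul_smul, conj_reindex_mul_conj_reindex_eq_one (hT i) _
      (fromBlocks_mul_fromBlocks_inv (hP1 i).det_pos.ne'.isUnit (hP2 i).det_pos.ne'.isUnit)]
  case orthogonal =>
    rw [transpose_blockDiag, blockDiag_mul_blockDiag, ← blockDiag_const_one]
    exact congrArg _root_.blockDiag (funext fun i => mul_eq_one_comm.mp (hT i))
  case agents =>
    rw [← blockDiag_const_one]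
    simp only [transpose_blockDiag, blockDiag_mul_blockDiag, blockDiag_add_blockDiag,
      blockDiag_sub_blockDiag, smul_blockDiag]
    refine posDef_blockDiag fun i => ?_
    rw [diagonal_ite_lt_eq_reindex (hv i)]
    exact posDef_local_of_negDef_lmi (hT i) _ (hA i) (hC i) (hH i) (G1 i) (P1 i) (P2 i) (hLMI i)

/-- Lemma 4 of the paper (stability part): if the local LMIs hold, then the block-diagonal
`P = blockdiag(T_i diag(P_{i1},P_{i2}) T_iᵀ) > 0` satisfies
`ĀᵀP + PĀ − (Lᵀ⊗I)F̄ᵀP − PF̄(L⊗I) + I_N ⊗ HᵀH < 0`. -/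
theorem stmt_19 {N n p : ℕ} (r : Fin N → ℕ)
    (L : Matrix (Fin N) (Fin N) ℝ) (hL : IsLaplacianOfStronglyConnectedDigraph L)
    (θ : Fin N → ℝ) (hθpos : ∀ i, 0 < θ i) (hθL : Matrix.vecMul θ L = 0)
    (hθsum : ∑ i, θ i = (N : ℝ))
    (A : Matrix (Fin n) (Fin n) ℝ) (H : Matrix (Fin p) (Fin n) ℝ)
    (C : ∀ i : Fin N, Matrix (Fin (r i)) (Fin n) ℝ)
    (T : Fin N → Matrix (Fin n) (Fin n) ℝ) (hT : ∀ i, (T i)ᵀ * T i = 1)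
    (v : Fin N → ℕ) (hv : ∀ i, v i ≤ n)
    (A11 : ∀ i : Fin N, Matrix (Fin (v i)) (Fin (v i)) ℝ)
    (A21 : ∀ i : Fin N, Matrix (Fin (n - v i)) (Fin (v i)) ℝ)
    (A22 : ∀ i : Fin N, Matrix (Fin (n - v i)) (Fin (n - v i)) ℝ)
    (C1 : ∀ i : Fin N, Matrix (Fin (r i)) (Fin (v i)) ℝ)
    (H1 : ∀ i : Fin N, Matrix (Fin p) (Fin (v i)) ℝ)
    (H2 : ∀ i : Fin N, Matrix (Fin p) (Fin (n - v i)) ℝ)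
    (hA : ∀ i, (T i)ᵀ * A * T i =
      Matrix.reindex (decompEquiv (v i) n (hv i)).symm (decompEquiv (v i) n (hv i)).symm
        (Matrix.fromBlocks (A11 i) 0 (A21 i) (A22 i)))
    (hC : ∀ i, C i * T i =
      Matrix.reindex (Equiv.refl (Fin (r i))) (decompEquiv (v i) n (hv i)).symm
        (Matrix.fromCols (C1 i) 0))
    (hH : ∀ i, H * T i =
      Matrix.reindex (Equiv.refl (Fin p)) (decompEquiv (v i) n (hv i)).symm
        (Matrix.fromCols (H1 i) (H2 i)))
    (m : Fin N → ℝ) (hm : ∀ i, 0 < m i) (ε : ℝ) (hε : 0 < ε)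
    (hεbound : ((blockDiag T)ᵀ *
        ((Matrix.diagonal θ * L + Lᵀ * Matrix.diagonal θ) ⊗ₖ (1 : Matrix (Fin n) (Fin n) ℝ)) *
        blockDiag T +
      blockDiag (fun i => Matrix.diagonal (fun j : Fin n => if (j : ℕ) < v i then m i else 0)) -
      ε • (1 : Matrix (Fin N × Fin n) (Fin N × Fin n) ℝ)).PosDef)
    (G1 : ∀ i : Fin N, Matrix (Fin (v i)) (Fin (r i)) ℝ)
    (κ : ℝ) (hκ : 0 < κ)
    (P1 : ∀ i : Fin N, Matrix (Fin (v i)) (Fin (v i)) ℝ) (hP1 : ∀ i, (P1 i).PosDef)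
    (P2 : ∀ i : Fin N, Matrix (Fin (n - v i)) (Fin (n - v i)) ℝ) (hP2 : ∀ i, (P2 i).PosDef)
    (hLMI : ∀ i, NegDef (Matrix.fromBlocks
      ((A11 i - G1 i * C1 i)ᵀ * P1 i + P1 i * (A11 i - G1 i * C1 i) + (H1 i)ᵀ * H1 i +
        (κ * (m i - ε)) • (1 : Matrix (Fin (v i)) (Fin (v i)) ℝ))
      ((A21 i)ᵀ * P2 i + (H1 i)ᵀ * H2 i)
      (P2 i * A21 i + (H2 i)ᵀ * H1 i)
      (P2 i * A22 i + (A22 i)ᵀ * P2 i + (H2 i)ᵀ * H2 i -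
        (κ * ε) • (1 : Matrix (Fin (n - v i)) (Fin (n - v i)) ℝ)))) :
    (blockDiag (fun i => T i *
        Matrix.reindex (decompEquiv (v i) n (hv i)).symm (decompEquiv (v i) n (hv i)).symm
          (Matrix.fromBlocks (P1 i) 0 0 (P2 i)) * (T i)ᵀ)).PosDef ∧
    NegDef (
      (blockDiag (fun i => A - (T i *
          Matrix.reindex (decompEquiv (v i) n (hv i)).symm (Equiv.refl (Fin (r i)))
            (Matrix.fromRows (G1 i) 0)) * C i))ᵀ *
        blockDiag (fun i => T i *
          Matrix.reindex (decompEquiv (v i) n (hv i)).symm (decompEquiv (v i) n (hv i)).symm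
            (Matrix.fromBlocks (P1 i) 0 0 (P2 i)) * (T i)ᵀ) +
      blockDiag (fun i => T i *
          Matrix.reindex (decompEquiv (v i) n (hv i)).symm (decompEquiv (v i) n (hv i)).symm
            (Matrix.fromBlocks (P1 i) 0 0 (P2 i)) * (T i)ᵀ) *
        blockDiag (fun i => A - (T i *
          Matrix.reindex (decompEquiv (v i) n (hv i)).symm (Equiv.refl (Fin (r i)))
            (Matrix.fromRows (G1 i) 0)) * C i) -
      (Lᵀ ⊗ₖ (1 : Matrix (Fin n) (Fin n) ℝ)) *
        (blockDiag (fun i => (κ * θ i) • (T i *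
          Matrix.reindex (decompEquiv (v i) n (hv i)).symm (decompEquiv (v i) n (hv i)).symm
            (Matrix.fromBlocks (P1 i)⁻¹ 0 0 (P2 i)⁻¹) * (T i)ᵀ)))ᵀ *
        blockDiag (fun i => T i *
          Matrix.reindex (decompEquiv (v i) n (hv i)).symm (decompEquiv (v i) n (hv i)).symm
            (Matrix.fromBlocks (P1 i) 0 0 (P2 i)) * (T i)ᵀ) -
      blockDiag (fun i => T i *
          Matrix.reindex (decompEquiv (v i) n (hv i)).symm (decompEquiv (v i) n (hv i)).symm
            (Matrix.fromBlocks (P1 i) 0 0 (P2 i)) * (T i)ᵀ) *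
        blockDiag (fun i => (κ * θ i) • (T i *
          Matrix.reindex (decompEquiv (v i) n (hv i)).symm (decompEquiv (v i) n (hv i)).symm
            (Matrix.fromBlocks (P1 i)⁻¹ 0 0 (P2 i)⁻¹) * (T i)ᵀ)) *
        (L ⊗ₖ (1 : Matrix (Fin n) (Fin n) ℝ)) +
      blockDiag (fun _ => Hᵀ * H)) :=
  stmt_19_general r L θ A H C T hT v hv A11 A21 A22 C1 H1 H2 hA hC hH m ε hεbound G1 κ hκ P1 hP1 P2
    hP2 hLMI
end
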